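/- arXiv:1905.07139 — 6 statements merged into one kernel-verified Lean document; each statement's English description precedes it below -/
import Mathlib

section
/- If a word α is not in the language of a complete Büchi automaton A with n states, then every vertex v of the run DAG of A over α receives a finite rank satisfying 0 ≤ rank(v) ≤ 2n under the iterative ranking procedure (alternately removing finite and endangered vertices). -/
open scoped Classical

universe u v

/-- A (nondeterministic) Büchi automaton. -/
structure BA (A : Type u) (Q : Type v) where
  δ : Q → A → Set Q
  I : Set Q
  F : Set Q

namespace BA

variable {A : Type u} {Q : Type v}

/-- Completeness: every state has a successor on every symbol. -/
def Complete (M : BA A Q) : Prop := ∀ q a, (M.δ q a).Nonempty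

/-- `ρ` is a run of `M` over the infinite word `α` (from `ρ 0`). -/
def IsRun (M : BA A Q) (α : ℕ → A) (ρ : ℕ → Q) : Prop :=
  ∀ i, ρ (i + 1) ∈ M.δ (ρ i) (α i)

/-- `M` accepts `α` from state `q` (some run from `q` visits `F` infinitely often). -/
def AcceptsFrom (M : BA A Q) (q : Q) (α : ℕ → A) : Prop :=
  ∃ ρ, ρ 0 = q ∧ M.IsRun α ρ ∧ ∀ n, ∃ m ≥ n, ρ m ∈ M.F

def LangFrom (M : BA A Q) (q : Q) : Set (ℕ → A) := {α | M.AcceptsFrom q α}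

def Lang (M : BA A Q) : Set (ℕ → A) := {α | ∃ q ∈ M.I, M.AcceptsFrom q α}

/-! ### Simulation games -/

/-- A (positional, total) Duplicator strategy: given Duplicator's current state and
Spoiler's transition `p →a p'`, pick Duplicator's next state, which must be an
`a`-successor of Duplicator's current state. -/
def IsStrategy (M : BA A Q) (σ : Q → Q → A → Q → Q) : Prop :=
  ∀ r p a p', σ r p a p' ∈ M.δ r a

/-- The trace produced by Duplicator following strategy `σ` from `r` against
Spoiler's trace `ρ` over the word `α`. -/
def play (σ : Q → Q → A → Q → Q) (r : Q) (α : ℕ → A) (ρ : ℕ → Q) : ℕ → Q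
  | 0 => r
  | i + 1 => σ (play σ r α ρ i) (ρ i) (α i) (ρ (i + 1))

/-- Direct-simulation winning condition. -/
def CondDi (M : BA A Q) (ρ τ : ℕ → Q) : Prop := ∀ i, ρ i ∈ M.F → τ i ∈ M.F

/-- Delayed-simulation winning condition. -/
def CondDe (M : BA A Q) (ρ τ : ℕ → Q) : Prop := ∀ i, ρ i ∈ M.F → ∃ k ≥ i, τ k ∈ M.F

/-- Fair-simulation winning condition. -/
def CondF (M : BA A Q) (ρ τ : ℕ → Q) : Prop :=
  (∀ n, ∃ m ≥ n, ρ m ∈ M.F) → (∀ n, ∃ m ≥ n, τ m ∈ M.F)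

/-- `σ` is winning for Duplicator from configuration `(p, q)` wrt condition `C`. -/
def WinsFrom (M : BA A Q) (C : (ℕ → Q) → (ℕ → Q) → Prop)
    (σ : Q → Q → A → Q → Q) (p q : Q) : Prop :=
  ∀ α ρ, ρ 0 = p → M.IsRun α ρ → C ρ (play σ q α ρ)

/-- The (maximal) simulation relation given by winning condition `C`. -/
def Sim (M : BA A Q) (C : (ℕ → Q) → (ℕ → Q) → Prop) (p q : Q) : Prop :=
  ∃ σ, M.IsStrategy σ ∧ M.WinsFrom C σ p q

def DiSim (M : BA A Q) : Q → Q → Prop := M.Sim M.CondDi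
def DeSim (M : BA A Q) : Q → Q → Prop := M.Sim M.CondDe
def FairSim (M : BA A Q) : Q → Q → Prop := M.Sim M.CondF

/-! ### Run DAGs and ranks -/

/-- Vertices of the run DAG of `M` over `α`. -/
def DagV (M : BA A Q) (α : ℕ → A) : Set (Q × ℕ) :=
  {v | ∃ ρ, ρ 0 ∈ M.I ∧ M.IsRun α ρ ∧ ρ v.2 = v.1}

/-- The edge relation of the run DAG. -/
def dagStep (M : BA A Q) (α : ℕ → A) (u v : Q × ℕ) : Prop :=
  v.2 = u.2 + 1 ∧ v.1 ∈ M.δ u.1 (α u.2)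

/-- Reachability inside a sub-DAG `G`. -/
def reachIn (M : BA A Q) (α : ℕ → A) (G : Set (Q × ℕ)) : Q × ℕ → Q × ℕ → Prop :=
  Relation.ReflTransGen (fun u v => u ∈ G ∧ v ∈ G ∧ M.dagStep α u v)

/-- A vertex of `G` is finite if it reaches only finitely many vertices inside `G`. -/
def FiniteIn (M : BA A Q) (α : ℕ → A) (G : Set (Q × ℕ)) (v : Q × ℕ) : Prop :=
  v ∈ G ∧ {u | M.reachIn α G v u}.Finite

/-- A vertex of `G` is endangered if it reaches no accepting vertex inside `G`. -/
def EndangeredIn (M : BA A Q) (α : ℕ → A) (G : Set (Q × ℕ)) (v : Q × ℕ) : Prop :=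
  v ∈ G ∧ ∀ u, M.reachIn α G v u → u.1 ∉ M.F

/-- The decreasing sequence of DAGs of the ranking procedure: at even steps remove
the finite vertices, at odd steps remove the endangered vertices. -/
def dagSeq (M : BA A Q) (α : ℕ → A) : ℕ → Set (Q × ℕ)
  | 0 => M.DagV α
  | j + 1 =>
      if Even j then M.dagSeq α j \ {v | M.FiniteIn α (M.dagSeq α j) v}
      else M.dagSeq α j \ {v | M.EndangeredIn α (M.dagSeq α j) v}

/-- The rank of a vertex: the step `j ≤ 2n` at which it is removed in the ranking
procedure, and `ω` (i.e. `⊤`) if it is never removed within `2n + 1` steps. -/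
noncomputable def rank (M : BA A Q) (α : ℕ → A) (n : ℕ) (v : Q × ℕ) : ℕ∞ :=
  if ∃ j ≤ 2 * n, v ∈ M.dagSeq α j ∧ v ∉ M.dagSeq α (j + 1) then
    ((sInf {j | v ∈ M.dagSeq α j ∧ v ∉ M.dagSeq α (j + 1)} : ℕ) : ℕ∞)
  else ⊤

end BA

/-! ### Schewe's rank-based complementation -/

/-- A macrostate `(S, O, f, i)` of the rank-based construction. -/
structure Macro (Q : Type v) where
  S : Set Q
  O : Set Q
  f : Q → ℕ
  i : ℕ

/-- The rank of a level ranking `f`: its maximal value. -/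
def rankOf {Q : Type v} [Fintype Q] (f : Q → ℕ) : ℕ := Finset.univ.sup f

/-- The smallest even number `≥ k`. -/
def rondNat (k : ℕ) : ℕ := if Even k then k else k + 1

/-- The smallest even number `≥ x`, with `⌈ω⌉ = ω`. -/
def rondE (x : ℕ∞) : ℕ∞ := WithTop.map rondNat x

namespace BA

variable {A : Type u} {Q : Type v}

/-- A level ranking: ranks bounded by `2n`, accepting states get even ranks. -/
def LevelRanking (M : BA A Q) (n : ℕ) (f : Q → ℕ) : Prop :=
  (∀ q, f q ≤ 2 * n) ∧ ∀ q ∈ M.F, Even (f q)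

/-- `f` is `S`-tight. -/
def STight [Fintype Q] (M : BA A Q) (n : ℕ) (S : Set Q) (f : Q → ℕ) : Prop :=
  M.LevelRanking n f ∧ Odd (rankOf f) ∧
  (∀ m, Odd m → m ≤ rankOf f → ∃ s ∈ S, f s = m) ∧
  ∀ q ∉ S, f q = 0

/-- Successors of a set of states. -/
def δSet (M : BA A Q) (S : Set Q) (a : A) : Set Q := ⋃ q ∈ S, M.δ q a

/-- Validity of a macrostate, i.e., membership in `Q₂`. -/
def Q2Valid [Fintype Q] (M : BA A Q) (n : ℕ) (m : Macro Q) : Prop :=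
  M.STight n m.S m.f ∧ m.O ⊆ m.S ∩ {q | m.f q = m.i} ∧ Even m.i ∧ m.i + 2 ≤ 2 * n

/-- The `δ₃` successor condition of the rank-based construction, where `cl` is the
closure operator applied to the successor set (use `cl = id` for the plain
construction). -/
def macroSucc [Fintype Q] (M : BA A Q) (cl : Set Q → Set Q) (m m' : Macro Q)
    (a : A) : Prop :=
  m'.S = cl (M.δSet m.S a) ∧
  (∀ q ∈ m.S, ∀ q' ∈ M.δ q a, m'.f q' ≤ m.f q) ∧
  rankOf m'.f = rankOf m.f ∧
  ((m.O = ∅ ∧ m'.i = (m.i + 2) % (rankOf m'.f + 1) ∧ m'.O = {q | m'.f q = m'.i}) ∨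
   (m.O ≠ ∅ ∧ m'.i = m.i ∧ m'.O = M.δSet m.O a ∩ {q | m'.f q = m'.i}))

/-- Schewe's rank-based complement construction, parameterized by a predicate
`keep` selecting which macrostates of `Q₂` are kept (use `fun _ => True` for the
plain construction) and a closure `cl` applied to successor sets (use `id` for
the plain construction). -/
def schewe [Fintype Q] (M : BA A Q) (n : ℕ) (keep : Macro Q → Prop)
    (cl : Set Q → Set Q) : BA A (Set Q ⊕ Macro Q) where
  δ := fun s a =>
    match s with
    | Sum.inl S =>
        {Sum.inl (cl (M.δSet S a))} ∪
        {s' | ∃ m : Macro Q, s' = Sum.inr m ∧ m.S = cl (M.δSet S a) ∧ m.O = ∅ ∧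
              m.i = 0 ∧ M.Q2Valid n m ∧ keep m}
    | Sum.inr m =>
        {s' | ∃ m' : Macro Q, s' = Sum.inr m' ∧ M.macroSucc cl m m' a ∧
              M.Q2Valid n m' ∧ keep m'}
  I := {Sum.inl M.I}
  F := {Sum.inl (∅ : Set Q)} ∪
       {s | ∃ m : Macro Q, s = Sum.inr m ∧ m.O = ∅ ∧ M.Q2Valid n m ∧ keep m}

/-! ### Finite paths, quotients, added transitions -/

/-- Finite path from `p` to `q` over the finite word `w`. -/
inductive Path (M : BA A Q) : Q → List A → Q → Prop
  | nil (q : Q) : Path M q [] q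
  | cons {p q r : Q} {a : A} {w : List A} :
      q ∈ M.δ p a → Path M q w r → Path M p (a :: w) r

/-- Finite path from `p` to `q` over `w` that visits an accepting state. -/
inductive APath (M : BA A Q) : Q → List A → Q → Prop
  | here {p : Q} {w : List A} {q : Q} : p ∈ M.F → Path M p w q → APath M p w q
  | step {p q r : Q} {a : A} {w : List A} :
      q ∈ M.δ p a → APath M q w r → APath M p (a :: w) r

/-- The factor of the infinite word `α` between positions `i` (included) and
`j` (excluded). -/
def wordSeg (α : ℕ → A) (i j : ℕ) : List A := (List.range (j - i)).map fun m => α (i + m)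

/-- `α` belongs to the ω-power `L^ω` of the language `L` of finite words. -/
def InOmegaPow (L : Language A) (α : ℕ → A) : Prop :=
  ∃ t : ℕ → ℕ, t 0 = 0 ∧ StrictMono t ∧ ∀ k, wordSeg α (t k) (t (k + 1)) ∈ L

/-- The automaton `M` with the extra transition `r →a p` added. -/
def addTr (M : BA A Q) (r : Q) (a : A) (p : Q) : BA A Q where
  δ := fun s b => M.δ s b ∪ {x | s = r ∧ b = a ∧ x = p}
  I := M.I
  F := M.F

/-- The quotient automaton of `M` by the equivalence (setoid) `s`. -/
def quotBA (M : BA A Q) (s : Setoid Q) : BA A (Quotient s) where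
  δ := fun c a => {c' | ∃ u u', Quotient.mk s u = c ∧ Quotient.mk s u' = c' ∧ u' ∈ M.δ u a}
  I := {c | ∃ u ∈ M.I, Quotient.mk s u = c}
  F := {c | ∃ u ∈ M.F, Quotient.mk s u = c}

end BA

/-! ### Auxiliary lemmas for Statement 0 -/

namespace BA

section Stmt0Aux

variable {A : Type u} {Q : Type v}

lemma reachIn_mem_right {M : BA A Q} {α : ℕ → A} {G : Set (Q × ℕ)} {v u : Q × ℕ}
    (h : M.reachIn α G v u) (hv : v ∈ G) : u ∈ G := by
  induction h with
  | refl => exact hv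
  | tail _ h _ => exact h.2.1

lemma reachIn_snd_le {M : BA A Q} {α : ℕ → A} {G : Set (Q × ℕ)} {v u : Q × ℕ}
    (h : M.reachIn α G v u) : v.2 ≤ u.2 := by
  induction h with
  | refl => exact le_refl _
  | tail _ h ih => have := h.2.2.1; omega

lemma reachIn_trans {M : BA A Q} {α : ℕ → A} {G : Set (Q × ℕ)} {v u w : Q × ℕ}
    (h1 : M.reachIn α G v u) (h2 : M.reachIn α G u w) : M.reachIn α G v w :=
  Relation.ReflTransGen.trans h1 h2

lemma reachIn_eq_of_snd_le {M : BA A Q} {α : ℕ → A} {G : Set (Q × ℕ)} {v u : Q × ℕ}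
    (h : M.reachIn α G v u) (hle : u.2 ≤ v.2) : u = v := by
  rcases Relation.ReflTransGen.cases_head h with h' | ⟨w, hw, hwu⟩
  · exact h'.symm
  · have h1 : w.2 = v.2 + 1 := hw.2.2.1
    have h2 : w.2 ≤ u.2 := reachIn_snd_le hwu
    omega

variable [Fintype Q]

lemma dagSeq_succ_subset (M : BA A Q) (α : ℕ → A) (j : ℕ) :
    M.dagSeq α (j + 1) ⊆ M.dagSeq α j := by
  by_cases h : Even j <;> simp only [dagSeq, h, if_true, if_false] <;>
    exact Set.diff_subset

lemma dagSeq_subset_dagV (M : BA A Q) (α : ℕ → A) (j : ℕ) :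
    M.dagSeq α j ⊆ M.DagV α := by
  induction j with
  | zero => exact subset_rfl
  | succ j ih => exact (dagSeq_succ_subset M α j).trans ih

lemma dagSeq_odd_eq (M : BA A Q) (α : ℕ → A) (j : ℕ) :
    M.dagSeq α (2 * j + 1) =
      M.dagSeq α (2 * j) \ {v | M.FiniteIn α (M.dagSeq α (2 * j)) v} := by
  have h : Even (2 * j) := ⟨j, two_mul j⟩
  simp only [dagSeq, h, if_true]

lemma dagSeq_even_eq (M : BA A Q) (α : ℕ → A) (j : ℕ) :
    M.dagSeq α (2 * j + 2) =
      M.dagSeq α (2 * j + 1) \ {v | M.EndangeredIn α (M.dagSeq α (2 * j + 1)) v} := by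
  have h : ¬ Even (2 * j + 1) := by
    rw [Nat.even_add_one]; exact not_not_intro ⟨j, two_mul j⟩
  show (if Even (2 * j + 1) then _ else _) = _
  simp only [h, if_false]

/-- A non-finite vertex has a non-finite successor. -/
lemma exists_succ_notFinite (M : BA A Q) (α : ℕ → A) {G : Set (Q × ℕ)} {v : Q × ℕ}
    (hv : v ∈ G) (hinf : ¬ {u | M.reachIn α G v u}.Finite) :
    ∃ w, M.dagStep α v w ∧ w ∈ G ∧ ¬ {u | M.reachIn α G w u}.Finite := by
  by_contra hc
  push_neg at hc
  apply hinf
  have hsub : {u | M.reachIn α G v u} ⊆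
      {v} ∪ ⋃ w ∈ {w | w ∈ G ∧ M.dagStep α v w}, {u | M.reachIn α G w u} := by
    intro u hu
    rcases Relation.ReflTransGen.cases_head hu with h | ⟨w, hw, hwu⟩
    · left; simp [← h]
    · right; exact Set.mem_biUnion ⟨hw.2.1, hw.2.2⟩ hwu
  refine Set.Finite.subset (Set.Finite.union (Set.finite_singleton v) ?_) hsub
  refine Set.Finite.biUnion ?_ ?_
  · refine Set.Finite.subset (Set.finite_range (fun q : Q => (q, v.2 + 1))) ?_
    rintro ⟨q, l⟩ ⟨_, hstep⟩
    exact ⟨q, by simp [← hstep.1]⟩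
  · intro w hw
    exact hc w hw.2 hw.1

lemma succ_in_odd (M : BA A Q) (α : ℕ → A) {j : ℕ} {v : Q × ℕ}
    (hv : v ∈ M.dagSeq α (2 * j + 1)) :
    ∃ w ∈ M.dagSeq α (2 * j + 1), M.dagStep α v w := by
  rw [dagSeq_odd_eq] at hv ⊢
  obtain ⟨hvG, hvnf⟩ := hv
  have hinf : ¬ {u | M.reachIn α (M.dagSeq α (2 * j)) v u}.Finite :=
    fun h => hvnf ⟨hvG, h⟩
  obtain ⟨w, hstep, hwG, hwinf⟩ := exists_succ_notFinite M α hvG hinf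
  exact ⟨w, ⟨hwG, fun hf => hwinf hf.2⟩, hstep⟩

lemma reach_level_odd (M : BA A Q) (α : ℕ → A) {j : ℕ} {v : Q × ℕ}
    (hv : v ∈ M.dagSeq α (2 * j + 1)) :
    ∀ l, v.2 ≤ l → ∃ u, M.reachIn α (M.dagSeq α (2 * j + 1)) v u ∧
      u ∈ M.dagSeq α (2 * j + 1) ∧ u.2 = l := by
  intro l hl
  induction l, hl using Nat.le_induction with
  | base => exact ⟨v, Relation.ReflTransGen.refl, hv, rfl⟩
  | succ l _ ih =>
    obtain ⟨u, hreach, hu, hlev⟩ := ih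
    obtain ⟨w, hw, hstep⟩ := succ_in_odd M α hu
    exact ⟨w, Relation.ReflTransGen.tail hreach ⟨hu, hw, hstep⟩, hw,
      by rw [hstep.1, hlev]⟩

lemma endangered_of_reach (M : BA A Q) (α : ℕ → A) {G : Set (Q × ℕ)} {v u : Q × ℕ}
    (hv : M.EndangeredIn α G v) (h : M.reachIn α G v u) : M.EndangeredIn α G u :=
  ⟨reachIn_mem_right h hv.1, fun w hw => hv.2 w (reachIn_trans h hw)⟩

/-- If some vertex survives in `G^{2j+1}` and no vertex of it is endangered,
then `α` is accepted. -/
lemma accepts_of_no_endangered (M : BA A Q) (α : ℕ → A) {j : ℕ} {v0 : Q × ℕ}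
    (hv0 : v0 ∈ M.dagSeq α (2 * j + 1))
    (hne : ∀ v ∈ M.dagSeq α (2 * j + 1),
      ∃ u, M.reachIn α (M.dagSeq α (2 * j + 1)) v u ∧ u.1 ∈ M.F) :
    α ∈ M.Lang := by
  set G' := M.dagSeq α (2 * j + 1) with hG'
  -- distance to an accepting vertex
  set d : Q × ℕ → ℕ :=
    fun v => sInf {m | ∃ u, M.reachIn α G' v u ∧ u.1 ∈ M.F ∧ u.2 = v.2 + m} with hd
  have hdmem : ∀ v ∈ G', ∃ u, M.reachIn α G' v u ∧ u.1 ∈ M.F ∧ u.2 = v.2 + d v := by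
    intro v hv
    obtain ⟨u, hreach, hF⟩ := hne v hv
    have hle := reachIn_snd_le hreach
    have : (u.2 - v.2) ∈ {m | ∃ u, M.reachIn α G' v u ∧ u.1 ∈ M.F ∧ u.2 = v.2 + m} :=
      ⟨u, hreach, hF, by omega⟩
    exact Nat.sInf_mem ⟨_, this⟩
  -- one controlled step
  have hstep : ∀ v : Q × ℕ, ∃ w, v ∈ G' →
      (M.dagStep α v w ∧ w ∈ G' ∧ (v.1 ∈ M.F ∨ d w < d v)) := by
    intro v
    by_cases hv : v ∈ G'
    · by_cases hF : v.1 ∈ M.F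
      · obtain ⟨w, hw, hstep⟩ := succ_in_odd M α hv
        exact ⟨w, fun _ => ⟨hstep, hw, Or.inl hF⟩⟩
      · obtain ⟨u, hreach, huF, hlev⟩ := hdmem v hv
        have hdv : 0 < d v := by
          rcases Nat.eq_zero_or_pos (d v) with h0 | h
          · exfalso
            have : u = v := reachIn_eq_of_snd_le hreach (by omega)
            exact hF (this ▸ huF)
          · exact h
        rcases Relation.ReflTransGen.cases_head hreach with h' | ⟨w, hw, hwu⟩
        · exact absurd (h' ▸ huF) hF
        · refine ⟨w, fun _ => ⟨hw.2.2, hw.2.1, Or.inr ?_⟩⟩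
          have hwlev : w.2 = v.2 + 1 := hw.2.2.1
          have : d w ≤ d v - 1 := Nat.sInf_le ⟨u, hwu, huF, by omega⟩
          omega
    · exact ⟨v, fun h => absurd h hv⟩
  choose nxt hnxt using hstep
  set vseq : ℕ → Q × ℕ := fun k => nxt^[k] v0 with hvseq
  have hvseq_succ : ∀ k, vseq (k + 1) = nxt (vseq k) := by
    intro k; simp [hvseq, Function.iterate_succ_apply']
  have hmem : ∀ k, vseq k ∈ G' ∧ (vseq k).2 = v0.2 + k := by
    intro k
    induction k with
    | zero => exact ⟨hv0, rfl⟩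
    | succ k ih =>
      have h := hnxt (vseq k) ih.1
      rw [hvseq_succ]
      have hl : (nxt (vseq k)).2 = (vseq k).2 + 1 := h.1.1
      exact ⟨h.2.1, by omega⟩
  -- F occurs infinitely often along vseq
  have hFinf : ∀ k, ∃ k' ≥ k, (vseq k').1 ∈ M.F := by
    intro k
    by_contra hc
    push_neg at hc
    have hdesc : ∀ m, d (vseq (k + m)) + m ≤ d (vseq k) := by
      intro m
      induction m with
      | zero => simp
      | succ m ih =>
        have h := hnxt (vseq (k + m)) (hmem (k + m)).1
        have hnF : (vseq (k + m)).1 ∉ M.F := hc (k + m) (by omega)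
        have hlt : d (vseq (k + m + 1)) < d (vseq (k + m)) := by
          rw [hvseq_succ]
          rcases h.2.2 with h' | h'
          · exact absurd h' hnF
          · exact h'
        have : k + (m + 1) = k + m + 1 := by omega
        rw [this]
        omega
    have := hdesc (d (vseq k) + 1)
    omega
  -- build the accepting run
  obtain ⟨ρ0, hρ0I, hρ0run, hρ0v⟩ := dagSeq_subset_dagV M α (2 * j + 1) hv0
  set ρ : ℕ → Q := fun i => if i ≤ v0.2 then ρ0 i else (vseq (i - v0.2)).1 with hρ
  have hρhigh : ∀ i, v0.2 ≤ i → ρ i = (vseq (i - v0.2)).1 := by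
    intro i hi
    rcases Nat.eq_or_lt_of_le hi with h | h
    · subst h
      simp [hρ, hvseq, hρ0v]
    · simp [hρ, Nat.not_le_of_lt h]
  have hrun : M.IsRun α ρ := by
    intro i
    by_cases hi : i + 1 ≤ v0.2
    · have h1 : ρ i = ρ0 i := by simp [hρ, Nat.le_of_succ_le hi]
      have h2 : ρ (i + 1) = ρ0 (i + 1) := by simp [hρ, hi]
      rw [h1, h2]; exact hρ0run i
    · have hi' : v0.2 ≤ i := by omega
      have h1 := hρhigh i hi'
      have h2 := hρhigh (i + 1) (by omega)
      have hk : i + 1 - v0.2 = (i - v0.2) + 1 := by omega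
      rw [h1, h2, hk, hvseq_succ]
      have h := hnxt (vseq (i - v0.2)) (hmem (i - v0.2)).1
      have hlev : (vseq (i - v0.2)).2 = i := by
        have := (hmem (i - v0.2)).2; omega
      have := h.1.2
      rw [hlev] at this
      exact this
  refine ⟨ρ 0, ?_, ρ, rfl, hrun, ?_⟩
  · have : ρ 0 = ρ0 0 := by simp [hρ]
    rw [this]; exact hρ0I
  · intro N
    obtain ⟨k', hk', hF⟩ := hFinf N
    refine ⟨v0.2 + k', by omega, ?_⟩
    have := hρhigh (v0.2 + k') (by omega)
    rw [this]
    have : v0.2 + k' - v0.2 = k' := by omega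
    rw [this]; exact hF

/-- Width bound: levels of `G^{2j}` eventually have at most `card Q - j` vertices. -/
lemma width_bound (M : BA A Q) (α : ℕ → A) (hα : α ∉ M.Lang) :
    ∀ j, ∃ L, ∀ l ≥ L,
      ({q | (q, l) ∈ M.dagSeq α (2 * j)}).ncard ≤ Fintype.card Q - j := by
  intro j
  induction j with
  | zero =>
    refine ⟨0, fun l _ => ?_⟩
    calc ({q | (q, l) ∈ M.dagSeq α 0}).ncard
        ≤ (Set.univ : Set Q).ncard := Set.ncard_le_ncard (Set.subset_univ _) Set.finite_univ
      _ = Fintype.card Q - 0 := by rw [Set.ncard_univ, Nat.card_eq_fintype_card]; omega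
  | succ j ih =>
    obtain ⟨L, hL⟩ := ih
    rcases Set.eq_empty_or_nonempty (M.dagSeq α (2 * j + 1)) with hemp | ⟨v, hv⟩
    · refine ⟨0, fun l _ => ?_⟩
      have hsub : M.dagSeq α (2 * (j + 1)) ⊆ M.dagSeq α (2 * j + 1) := by
        have : 2 * (j + 1) = (2 * j + 1) + 1 := by omega
        rw [this]
        exact dagSeq_succ_subset M α (2 * j + 1)
      have : {q | (q, l) ∈ M.dagSeq α (2 * (j + 1))} = ∅ := by
        ext q; simp only [Set.mem_setOf_eq, Set.mem_empty_iff_false, iff_false]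
        intro h; rw [hemp] at hsub; exact hsub h
      rw [this, Set.ncard_empty]; omega
    · -- there is an endangered vertex
      have hend : ∃ vE, M.EndangeredIn α (M.dagSeq α (2 * j + 1)) vE := by
        by_contra hc
        push_neg at hc
        refine hα (accepts_of_no_endangered M α hv ?_)
        intro w hw
        have := hc w
        rw [EndangeredIn] at this
        push_neg at this
        obtain ⟨u, hu1, hu2⟩ := this hw
        exact ⟨u, hu1, hu2⟩
      obtain ⟨vE, hvE⟩ := hend
      refine ⟨max L vE.2, fun l hl => ?_⟩
      obtain ⟨u, hreach, hu, hulev⟩ :=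
        reach_level_odd M α hvE.1 l (le_trans (le_max_right _ _) hl)
      have huend : M.EndangeredIn α (M.dagSeq α (2 * j + 1)) u :=
        endangered_of_reach M α hvE hreach
      have hunot : u ∉ M.dagSeq α (2 * (j + 1)) := by
        have : 2 * (j + 1) = 2 * j + 2 := by omega
        rw [this, dagSeq_even_eq]
        exact fun h => h.2 huend
      have huG : u ∈ M.dagSeq α (2 * j) := by
        have := dagSeq_succ_subset M α (2 * j)
        rw [dagSeq_odd_eq] at hu
        exact hu.1
      have hsub : {q | (q, l) ∈ M.dagSeq α (2 * (j + 1))} ⊆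
          {q | (q, l) ∈ M.dagSeq α (2 * j)} := by
        intro q hq
        have h1 : 2 * (j + 1) = (2 * j + 1) + 1 := by omega
        have h2 := dagSeq_succ_subset M α (2 * j + 1)
        have h3 := dagSeq_succ_subset M α (2 * j)
        rw [dagSeq_odd_eq] at h2
        exact (h2 (h1 ▸ hq)).1
      have hu1mem : u.1 ∈ {q | (q, l) ∈ M.dagSeq α (2 * j)} := by
        have : (u.1, l) = u := by rw [← hulev]
        rw [Set.mem_setOf_eq, this]; exact huG
      have hu1not : u.1 ∉ {q | (q, l) ∈ M.dagSeq α (2 * (j + 1))} := by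
        have : (u.1, l) = u := by rw [← hulev]
        rw [Set.mem_setOf_eq, this]; exact hunot
      have hss : {q | (q, l) ∈ M.dagSeq α (2 * (j + 1))} ⊂
          {q | (q, l) ∈ M.dagSeq α (2 * j)} :=
        hsub.ssubset_of_ne (fun he => hu1not (he ▸ hu1mem))
      have hlt := Set.ncard_lt_ncard hss (Set.toFinite _)
      have hle := hL l (le_trans (le_max_left _ _) hl)
      omega

lemma dagSeq_final_empty (M : BA A Q) (α : ℕ → A) (hα : α ∉ M.Lang) :
    M.dagSeq α (2 * Fintype.card Q + 1) = ∅ := by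
  obtain ⟨L, hL⟩ := width_bound M α hα (Fintype.card Q)
  have hfin : (M.dagSeq α (2 * Fintype.card Q)).Finite := by
    apply Set.Finite.subset
      (Set.Finite.prod (Set.finite_univ (α := Q)) (Set.finite_Iio L))
    rintro ⟨q, l⟩ hql
    refine ⟨Set.mem_univ q, ?_⟩
    by_contra hlL
    have hl : L ≤ l := by simpa [Set.mem_Iio] using hlL
    have h1 := hL l hl
    have h2 : q ∈ {q | (q, l) ∈ M.dagSeq α (2 * Fintype.card Q)} := hql
    have h3 : ({q | (q, l) ∈ M.dagSeq α (2 * Fintype.card Q)}).ncard = 0 := by omega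
    rw [Set.ncard_eq_zero (Set.toFinite _)] at h3
    rw [h3] at h2
    exact h2
  rw [dagSeq_odd_eq]
  rw [Set.diff_eq_empty]
  intro v hv
  refine ⟨hv, ?_⟩
  apply Set.Finite.subset hfin
  intro u hu
  exact reachIn_mem_right hu hv

end Stmt0Aux

end BA

/-- if `α ∉ L(A)` for a complete BA `A` with `n` states, every vertex
of the run DAG gets a finite rank between `0` and `2n`. -/
theorem stmt0 {A : Type u} {Q : Type v} [Fintype Q] (M : BA A Q)
    (hM : M.Complete) (n : ℕ) (hn : n = Fintype.card Q)
    (α : ℕ → A) (hα : α ∉ M.Lang) :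
    ∀ v ∈ M.DagV α, M.rank α n v ≤ ((2 * n : ℕ) : ℕ∞) := by
  intro v hv
  subst hn
  have hempty := BA.dagSeq_final_empty M α hα
  have hv0 : v ∈ M.dagSeq α 0 := hv
  have hvend : v ∉ M.dagSeq α (2 * Fintype.card Q + 1) := by
    rw [hempty]; exact Set.notMem_empty v
  set S := {j | v ∉ M.dagSeq α j} with hS
  have hSne : (2 * Fintype.card Q + 1) ∈ S := hvend
  have hj0mem : sInf S ∈ S := Nat.sInf_mem ⟨_, hSne⟩
  have hj0ne : sInf S ≠ 0 := fun h => (h ▸ hj0mem) hv0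
  obtain ⟨j, hj⟩ := Nat.exists_eq_succ_of_ne_zero hj0ne
  have hjmem : v ∈ M.dagSeq α j := by
    by_contra h
    have := Nat.sInf_le (show j ∈ S from h)
    omega
  have hjnot : v ∉ M.dagSeq α (j + 1) := by
    have h := hj0mem; rw [hj] at h; exact h
  have hjle : j ≤ 2 * Fintype.card Q := by
    have := Nat.sInf_le hSne
    omega
  rw [BA.rank, if_pos ⟨j, hjle, hjmem, hjnot⟩]
  exact_mod_cast (Nat.sInf_le (show j ∈ {j | v ∈ M.dagSeq α j ∧ v ∉ M.dagSeq α (j + 1)} from ⟨hjmem, hjnot⟩)).trans hjle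
end

section
/- If a word α is in the language of a Büchi automaton A, then there exists a state p with (p,0) a vertex of the run DAG of A over α such that the rank of (p,0) is ω. -/
open scoped Classical

universe u v

/-- if `α ∈ L(A)`, some vertex `(p, 0)` of the run DAG has rank `ω`. -/
theorem stmt1 {A : Type u} {Q : Type v} [Fintype Q] (M : BA A Q)
    (hM : M.Complete) (n : ℕ) (hn : n = Fintype.card Q)
    (α : ℕ → A) (hα : α ∈ M.Lang) :
    ∃ p : Q, (p, 0) ∈ M.DagV α ∧ M.rank α n (p, 0) = ⊤ := by
  obtain ⟨q, hqI, ρ, hρ0, hrun, hacc⟩ := hα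
  have hmem : ∀ j i, (ρ i, i) ∈ M.dagSeq α j := by
    intro j
    induction j with
    | zero => exact fun i => ⟨ρ, hρ0 ▸ hqI, hrun, rfl⟩
    | succ j ih =>
      intro i
      have hreach : ∀ m, i ≤ m → M.reachIn α (M.dagSeq α j) (ρ i, i) (ρ m, m) := by
        intro m hm
        induction m, hm using Nat.le_induction with
        | base => exact Relation.ReflTransGen.refl
        | succ m hm ihr =>
          exact ihr.tail ⟨ih m, ih (m + 1), rfl, hrun m⟩
      have hinf : {u | M.reachIn α (M.dagSeq α j) (ρ i, i) u}.Infinite := by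
        apply Set.infinite_of_injective_forall_mem
          (f := fun m : ℕ => ((ρ (i + m), i + m) : Q × ℕ))
        · intro a b hab
          have := congrArg Prod.snd hab
          simpa using this
        · intro m
          exact hreach (i + m) (Nat.le_add_right i m)
      simp only [BA.dagSeq]
      split
      · exact ⟨ih i, fun h => hinf h.2⟩
      · refine ⟨ih i, fun h => ?_⟩
        obtain ⟨m, hm, hF⟩ := hacc i
        exact h.2 (ρ m, m) (hreach m hm) hF
  refine ⟨ρ 0, hmem 0 0, ?_⟩
  rw [BA.rank, if_neg]
  rintro ⟨j, _, _, hnot⟩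
  exact hnot (hmem (j + 1) 0)
end

section
/- Let p ⊑_de q in a complete Büchi automaton, let L_⊤ be the set of finite words w with an accepting-state-visiting path p ⇒^w q, and L_⊥ the set of finite words w with some path p ⇒^w q. Then every infinite word in (L_⊥* L_⊤)^ω is accepted from q. -/
open scoped Classical

universe u v

/-!
Cut `α` into nonempty blocks, each read along a path `p ⇒ q`, infinitely many of them visiting
`F`. Spoiler's run on block `j` follows that path up to `q` and from then on copies the answer
that Duplicator's delayed-simulation strategy `σ`, started in `q`, gives to Spoiler's run on
block `j + 1`; this infinite regress is well founded because blocks have positive length.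
The delayed condition moves each visit to `F` of the run on block `j + 1` to a later visit of
the run on block `j`, so the run on block `0` visits `F` infinitely often, and the `σ`-answer to
it from `q` is an accepting run on `α`.
-/

open scoped Computability

theorem Language.mem_kstar_mul_sub_one {A : Type*} {l m : Language A} {x : List A}
    (hm : [] ∈ m → l ≤ m) (hx : x ∈ l∗ * m) (hne : x ≠ []) : x ∈ (l - 1)∗ * (m - 1) := by
  obtain ⟨y, hy, v, hv, rfl⟩ := Language.mem_mul.mp hx
  obtain ⟨S, rfl, hS⟩ := Language.mem_kstar_iff_exists_nonempty.mp hy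
  by_cases hv0 : v = []
  · subst hv0
    obtain ⟨S', z, rfl⟩ := S.eq_nil_or_concat'.resolve_left fun h => by simp [h] at hne
    refine Language.mem_mul.mpr ⟨S'.flatten, Language.join_mem_kstar fun z' hz' =>
      hS z' (by simp [hz']), z, ⟨hm hv (hS z (by simp)).1, (hS z (by simp)).2⟩, by simp⟩
  · exact Language.append_mem_mul (Language.join_mem_kstar hS) ⟨hv, hv0⟩

/-- Enumerates the pairs `(k, i)` with `i < n k` in lexicographic order. -/
def flatIndex (n : ℕ → ℕ) : ℕ → ℕ × ℕ
  | 0 => (0, 0)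
  | j + 1 =>
    if (flatIndex n j).2 + 1 < n (flatIndex n j).1 then
      ((flatIndex n j).1, (flatIndex n j).2 + 1)
    else ((flatIndex n j).1 + 1, 0)

section FlatIndex

variable {n : ℕ → ℕ}

theorem flatIndex_snd_lt (hn : ∀ k, 0 < n k) (j : ℕ) :
    (flatIndex n j).2 < n (flatIndex n j).1 := by
  induction j with
  | zero => exact hn 0
  | succ j _ =>
    rw [flatIndex]
    split_ifs with h
    · exact h
    · exact hn _

theorem flatIndex_fst_le (j : ℕ) : (flatIndex n j).1 ≤ j := by
  induction j with
  | zero => exact le_rfl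
  | succ j ih =>
    rw [flatIndex]
    split_ifs <;> dsimp only <;> omega

theorem flatIndex_add {j k : ℕ} (hj : flatIndex n j = (k, 0)) {m : ℕ} (hm : m < n k) :
    flatIndex n (j + m) = (k, m) := by
  induction m with
  | zero => exact hj
  | succ m ih =>
    rw [← add_assoc, flatIndex, ih (by omega), if_pos hm]

theorem exists_flatIndex_eq (hn : ∀ k, 0 < n k) {k i : ℕ} (hi : i < n k) :
    ∃ j, flatIndex n j = (k, i) := by
  suffices h : ∀ k, ∃ j, flatIndex n j = (k, 0) from
    (h k).elim fun j hj => ⟨j + i, flatIndex_add hj hi⟩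
  intro k
  induction k with
  | zero => exact ⟨0, rfl⟩
  | succ k ih =>
    obtain ⟨j, hj⟩ := ih
    refine ⟨j + (n k - 1) + 1, ?_⟩
    have hk := hn k
    rw [flatIndex, flatIndex_add hj (by omega), if_neg (by dsimp only; omega)]

end FlatIndex

namespace BA

variable {A : Type u} {Q : Type v}

theorem wordSeg_length (α : ℕ → A) (i j : ℕ) : (wordSeg α i j).length = j - i := by
  simp [wordSeg]

theorem getElem_wordSeg (α : ℕ → A) (i j m : ℕ) (h : m < (wordSeg α i j).length) :
    (wordSeg α i j)[m] = α (i + m) := by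
  simp [wordSeg]

theorem wordSeg_eq_of_eq_append {α : ℕ → A} {i j : ℕ} {u v w : List A}
    (h : wordSeg α i j = u ++ v ++ w) :
    wordSeg α (i + u.length) (i + u.length + v.length) = v := by
  have hlen := congrArg List.length h
  simp only [wordSeg_length, List.length_append] at hlen
  refine List.ext_getElem (by simp [wordSeg_length]) fun m hm _ => ?_
  rw [getElem_wordSeg, add_assoc, ← getElem_wordSeg α i j (u.length + m)
    (by rw [wordSeg_length]; simp [wordSeg_length] at hm; omega)]
  simp only [h, List.append_assoc, List.getElem_append_right (Nat.le_add_right _ _),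
    Nat.add_sub_cancel_left]
  exact List.getElem_append_left _

theorem InOmegaPow.mono {L L' : Language A} {α : ℕ → A}
    (hLL' : ∀ w ∈ L, w ≠ [] → w ∈ L') (h : InOmegaPow L α) : InOmegaPow L' α := by
  obtain ⟨t, ht0, ht, hseg⟩ := h
  refine ⟨t, ht0, ht, fun k => hLL' _ (hseg k) fun hnil => ?_⟩
  have hlen := congrArg List.length hnil
  rw [wordSeg_length, List.length_nil] at hlen
  have := ht (Nat.lt_add_one k)
  omega

theorem wordSeg_take_flatten {α : ℕ → A} {a b : ℕ} {L : List (List A)}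
    (h : wordSeg α a b = L.flatten) {i : ℕ} (hi : i < L.length) :
    wordSeg α (a + (L.take i).flatten.length) (a + (L.take (i + 1)).flatten.length) = L[i] := by
  have hL : L.flatten = (L.take i).flatten ++ L[i] ++ (L.drop (i + 1)).flatten := by
    calc L.flatten = (L.take (i + 1) ++ L.drop (i + 1)).flatten := by rw [List.take_append_drop]
      _ = _ := by
        rw [← List.take_append_getElem hi]
        simp only [List.flatten_append, List.flatten_cons, List.flatten_nil, List.append_nil]
  rw [← List.take_append_getElem hi, List.flatten_append, List.length_append, ← add_assoc]
  simpa using wordSeg_eq_of_eq_append (h.trans hL)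

theorem exists_blocks_of_flatten {α : ℕ → A} {t : ℕ → ℕ} (ht0 : t 0 = 0) (ht : Monotone t)
    {P : ℕ → List (List A)} (hP : ∀ k, P k ≠ [])
    (hseg : ∀ k, wordSeg α (t k) (t (k + 1)) = (P k).flatten) :
    ∃ s : ℕ → ℕ, s 0 = 0 ∧ (∀ j, ∃ k, wordSeg α (s j) (s (j + 1)) ∈ P k) ∧
      ∀ k, ∃ j ≥ k, wordSeg α (s j) (s (j + 1)) = (P k).getLast (hP k) := by
  have hn : ∀ k, 0 < (P k).length := fun k => List.length_pos_iff.mpr (hP k)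
  let cut (k i : ℕ) : ℕ := t k + ((P k).take i).flatten.length
  have hcut_last (k : ℕ) : cut k (P k).length = cut (k + 1) 0 := by
    have hlen := congrArg List.length (hseg k)
    rw [wordSeg_length] at hlen
    have := ht (Nat.le_add_right k 1)
    simp only [cut, List.take_length, List.take_zero, List.flatten_nil, List.length_nil]
    omega
  let e := flatIndex fun k => (P k).length
  let s (j : ℕ) : ℕ := cut (e j).1 (e j).2
  have hs_succ (j : ℕ) : s (j + 1) = cut (e j).1 ((e j).2 + 1) := by
    have hlt : (e j).2 < (P (e j).1).length := flatIndex_snd_lt hn j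
    show cut (e (j + 1)).1 (e (j + 1)).2 = _
    rw [show e (j + 1) = if (e j).2 + 1 < (P (e j).1).length then ((e j).1, (e j).2 + 1)
      else ((e j).1 + 1, 0) from rfl]
    split_ifs with h
    · rfl
    · rw [show (e j).2 + 1 = (P (e j).1).length by omega, hcut_last]
  have hs (j : ℕ) :
      wordSeg α (s j) (s (j + 1)) = (P (e j).1)[(e j).2]'(flatIndex_snd_lt hn j) := by
    rw [hs_succ]
    exact wordSeg_take_flatten (hseg _) _
  refine ⟨s, by simp [s, cut, e, flatIndex, ht0], fun j => ⟨_, (hs j).symm ▸ List.getElem_mem _⟩,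
    fun k => ?_⟩
  obtain ⟨j, hj⟩ := exists_flatIndex_eq hn (Nat.sub_one_lt_of_lt (hn k))
  refine ⟨j, ?_, ?_⟩
  · simpa [hj] using flatIndex_fst_le (n := fun k => (P k).length) j
  · rw [hs j, List.getLast_eq_getElem]
    simp only [e, hj]

theorem InOmegaPow.exists_blocks_of_kstar_mul {L L' : Language A} (hL : [] ∉ L)
    (hL' : [] ∉ L') {α : ℕ → A} (h : InOmegaPow (L∗ * L') α) :
    ∃ s : ℕ → ℕ, s 0 = 0 ∧ (∀ j, s j < s (j + 1)) ∧
      (∀ j, wordSeg α (s j) (s (j + 1)) ∈ L + L') ∧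
      ∀ n, ∃ j ≥ n, wordSeg α (s j) (s (j + 1)) ∈ L' := by
  obtain ⟨t, ht0, ht, hseg⟩ := h
  have hdecomp (k : ℕ) : ∃ (S : List (List A)) (v : List A),
      wordSeg α (t k) (t (k + 1)) = (S ++ [v]).flatten ∧ (∀ y ∈ S, y ∈ L) ∧ v ∈ L' := by
    obtain ⟨x, ⟨S, rfl, hS⟩, v, hv, hxv⟩ := Language.mem_mul.mp (hseg k)
    exact ⟨S, v, by simp [hxv], hS, hv⟩
  choose S v hSv hS hv using hdecomp
  obtain ⟨s, hs0, hmem, hlast⟩ :=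
    exists_blocks_of_flatten ht0 ht.monotone (P := fun k => S k ++ [v k]) (by simp) hSv
  have hblock (j : ℕ) : wordSeg α (s j) (s (j + 1)) ∈ L + L' := by
    obtain ⟨k, hk⟩ := hmem j
    rcases List.mem_append.mp hk with hk | hk
    · exact Or.inl (hS k _ hk)
    · exact Or.inr ((List.mem_singleton.mp hk).symm ▸ hv k)
  refine ⟨s, hs0, fun j => ?_, hblock,
    fun n => (hlast n).imp fun j ⟨hj, hjn⟩ => ⟨hj, by simpa [hjn] using hv n⟩⟩
  by_contra! hle
  have hnil : wordSeg α (s j) (s (j + 1)) = [] := by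
    rw [← List.length_eq_zero_iff, wordSeg_length]
    omega
  exact (hblock j).elim (fun h => hL (hnil ▸ h)) fun h => hL' (hnil ▸ h)

theorem Path.exists_run {M : BA A Q} {p q : Q} {w : List A} (h : M.Path p w q) :
    ∃ g : ℕ → Q, g 0 = p ∧ g w.length = q ∧
      ∀ i (hi : i < w.length), g (i + 1) ∈ M.δ (g i) w[i] := by
  induction h with
  | nil q => exact ⟨fun _ => q, rfl, rfl, fun i hi => absurd hi (Nat.not_lt_zero i)⟩
  | @cons p r _ a w hpr _ ih =>
    obtain ⟨g, hg0, hgw, hg⟩ := ih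
    refine ⟨fun i => i.casesOn p g, rfl, hgw, fun i hi => ?_⟩
    cases i with
    | zero => simpa [hg0] using hpr
    | succ i => exact hg i (Nat.lt_of_succ_lt_succ hi)

theorem APath.exists_run {M : BA A Q} {p q : Q} {w : List A} (h : M.APath p w q) :
    ∃ g : ℕ → Q, g 0 = p ∧ g w.length = q ∧
      (∀ i (hi : i < w.length), g (i + 1) ∈ M.δ (g i) w[i]) ∧ ∃ i ≤ w.length, g i ∈ M.F := by
  induction h with
  | here hp hpath =>
    obtain ⟨g, hg0, hgw, hg⟩ := hpath.exists_run
    exact ⟨g, hg0, hgw, hg, 0, Nat.zero_le _, hg0 ▸ hp⟩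
  | @step p r _ a w hpr _ ih =>
    obtain ⟨g, hg0, hgw, hg, i₀, hi₀, hgi₀⟩ := ih
    refine ⟨fun i => i.casesOn p g, rfl, hgw, fun i hi => ?_, i₀ + 1, by simpa using hi₀, hgi₀⟩
    cases i with
    | zero => simpa [hg0] using hpr
    | succ i => exact hg i (Nat.lt_of_succ_lt_succ hi)

theorem APath.toPath {M : BA A Q} {p q : Q} {w : List A} (h : M.APath p w q) : M.Path p w q := by
  induction h with
  | here _ hpath => exact hpath
  | step hpr _ ih => exact .cons hpr ih

theorem APath.mem_F_of_nil {M : BA A Q} {p q : Q} (h : M.APath p [] q) : p ∈ M.F := by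
  cases h with
  | here hp _ => exact hp

section StitchedRun

variable (σ : Q → Q → A → Q → Q) (β : ℕ → ℕ → A) (d : ℕ → ℕ) (g : ℕ → ℕ → Q)

def stitchedRun (j t : ℕ) : Q :=
  if t ≤ d j + 1 then g j t
  else
    σ (stitchedRun j (t - 1)) (stitchedRun (j + 1) (t - (d j + 2)))
      (β (j + 1) (t - (d j + 2))) (stitchedRun (j + 1) (t - (d j + 1)))
termination_by t
decreasing_by all_goals omega

variable {σ β d g}

theorem stitchedRun_of_le {j t : ℕ} (h : t ≤ d j + 1) : stitchedRun σ β d g j t = g j t := by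
  rw [stitchedRun, if_pos h]

theorem stitchedRun_add {q : Q} {j : ℕ} (hq : g j (d j + 1) = q) (i : ℕ) :
    stitchedRun σ β d g j (d j + 1 + i) = play σ q (β (j + 1)) (stitchedRun σ β d g (j + 1)) i := by
  induction i with
  | zero => exact (stitchedRun_of_le le_rfl).trans hq
  | succ i ih =>
    rw [stitchedRun, if_neg (by omega), show d j + 1 + (i + 1) - 1 = d j + 1 + i by omega,
      show d j + 1 + (i + 1) - (d j + 2) = i by omega,
      show d j + 1 + (i + 1) - (d j + 1) = i + 1 by omega, ih]
    rfl

variable {M : BA A Q} {p q : Q}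

theorem isRun_stitchedRun (hσ : M.IsStrategy σ) (hq : ∀ j, g j (d j + 1) = q)
    (hβ : ∀ j i, β j (d j + 1 + i) = β (j + 1) i)
    (hg : ∀ j i, i ≤ d j → g j (i + 1) ∈ M.δ (g j i) (β j i)) (j : ℕ) :
    M.IsRun (β j) (stitchedRun σ β d g j) := by
  intro t
  rcases le_or_gt t (d j) with ht | ht
  · rw [stitchedRun_of_le (t := t + 1) (by omega), stitchedRun_of_le (t := t) (by omega)]
    exact hg j t ht
  · obtain ⟨i, rfl⟩ : ∃ i, t = d j + 1 + i := ⟨t - (d j + 1), by omega⟩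
    rw [add_assoc (d j + 1) i 1, stitchedRun_add (hq j), stitchedRun_add (hq j), hβ]
    exact hσ _ _ _ _

theorem exists_stitchedRun_mem_F (hσ : M.IsStrategy σ) (hwin : M.WinsFrom M.CondDe σ p q)
    (hp : ∀ j, g j 0 = p) (hq : ∀ j, g j (d j + 1) = q)
    (hβ : ∀ j i, β j (d j + 1 + i) = β (j + 1) i)
    (hg : ∀ j i, i ≤ d j → g j (i + 1) ∈ M.δ (g j i) (β j i)) (m : ℕ) :
    ∀ j, (∃ i ≤ d (j + m) + 1, g (j + m) i ∈ M.F) → ∃ t ≥ m, stitchedRun σ β d g j t ∈ M.F := by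
  induction m with
  | zero =>
    rintro j ⟨i, hi, hgi⟩
    exact ⟨i, Nat.zero_le _, (stitchedRun_of_le hi).symm ▸ hgi⟩
  | succ m ih =>
    intro j hacc
    obtain ⟨t, htm, ht⟩ := ih (j + 1) (by rwa [Nat.add_right_comm, add_assoc])
    obtain ⟨k, hkt, hk⟩ := hwin (β (j + 1)) (stitchedRun σ β d g (j + 1))
      ((stitchedRun_of_le (Nat.zero_le _)).trans (hp _)) (isRun_stitchedRun hσ hq hβ hg _) t ht
    exact ⟨d j + 1 + k, by omega, (stitchedRun_add (hq j) k).symm ▸ hk⟩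

end StitchedRun

theorem acceptsFrom_of_deSim_of_blocks {M : BA A Q} {p q : Q} (h : M.DeSim p q) {α : ℕ → A}
    {s : ℕ → ℕ} (hs0 : s 0 = 0) (hs : ∀ j, s j < s (j + 1))
    (hpath : ∀ j, M.Path p (wordSeg α (s j) (s (j + 1))) q)
    (hacc : ∀ n, ∃ j ≥ n, M.APath p (wordSeg α (s j) (s (j + 1))) q) :
    M.AcceptsFrom q α := by
  obtain ⟨σ, hσ, hwin⟩ := h
  let β (j i : ℕ) : A := α (s j + i)
  obtain ⟨d, hd⟩ : ∃ d : ℕ → ℕ, ∀ j, s (j + 1) = s j + (d j + 1) :=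
    ⟨fun j => s (j + 1) - s j - 1, fun j => by dsimp only; have := hs j; omega⟩
  have hlen (j : ℕ) : (wordSeg α (s j) (s (j + 1))).length = d j + 1 := by
    rw [wordSeg_length, hd]; omega
  have hβ (j i : ℕ) : β j (d j + 1 + i) = β (j + 1) i := by
    simp only [β, hd, add_assoc]
  have hsteps (j : ℕ) {g : ℕ → Q} (hg : ∀ i (hi : i < (wordSeg α (s j) (s (j + 1))).length),
      g (i + 1) ∈ M.δ (g i) (wordSeg α (s j) (s (j + 1)))[i]) :
      ∀ i ≤ d j, g (i + 1) ∈ M.δ (g i) (β j i) := fun i hi => by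
    have hgi := hg i (by rw [hlen]; omega)
    rwa [getElem_wordSeg] at hgi
  have hfrag (j : ℕ) : ∃ g : ℕ → Q, g 0 = p ∧ g (d j + 1) = q ∧
      (∀ i ≤ d j, g (i + 1) ∈ M.δ (g i) (β j i)) ∧
      (M.APath p (wordSeg α (s j) (s (j + 1))) q → ∃ i ≤ d j + 1, g i ∈ M.F) := by
    by_cases hA : M.APath p (wordSeg α (s j) (s (j + 1))) q
    · obtain ⟨g, hg0, hgq, hg, hF⟩ := hA.exists_run
      exact ⟨g, hg0, hlen j ▸ hgq, hsteps j hg, fun _ => hlen j ▸ hF⟩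
    · obtain ⟨g, hg0, hgq, hg⟩ := (hpath j).exists_run
      exact ⟨g, hg0, hlen j ▸ hgq, hsteps j hg, fun hA' => absurd hA' hA⟩
  choose g hp hq hg hF using hfrag
  have hβ0 : β 0 = α := funext fun i => by simp [β, hs0]
  let ρ := stitchedRun σ β d g 0
  have hρ : ∀ n, ∃ t ≥ n, ρ t ∈ M.F := fun n => by
    obtain ⟨j, hjn, hj⟩ := hacc n
    obtain ⟨t, htj, ht⟩ :=
      exists_stitchedRun_mem_F hσ hwin hp hq hβ hg j 0 (by simpa using hF j hj)
    exact ⟨t, by omega, ht⟩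
  have hwinρ := hwin α ρ ((stitchedRun_of_le (Nat.zero_le _)).trans (hp 0))
    (hβ0 ▸ isRun_stitchedRun hσ hq hβ hg 0)
  refine ⟨play σ q α ρ, rfl, fun i => hσ _ _ _ _, fun n => ?_⟩
  obtain ⟨t, htn, ht⟩ := hρ n
  obtain ⟨k, hkt, hk⟩ := hwinρ t ht
  exact ⟨k, by omega, hk⟩

end BA

theorem stmt7_general {A : Type u} {Q : Type v} (M : BA A Q)
    (p q : Q) (h : M.DeSim p q)
    (LT LB : Language A)
    (hLT : LT = {w | M.APath p w q}) (hLB : LB = {w | M.Path p w q}) :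
    ∀ α : ℕ → A, BA.InOmegaPow (KStar.kstar LB * LT) α → M.AcceptsFrom q α := by
  subst hLT hLB
  intro α hα
  have hLT_nil : [] ∈ {w | M.APath p w q} → {w | M.Path p w q} ≤ {w | M.APath p w q} :=
    fun hpq _ hw => .here hpq.mem_F_of_nil hw
  have hα' := hα.mono fun _ hw hne => Language.mem_kstar_mul_sub_one hLT_nil hw hne
  obtain ⟨s, hs0, hs, hblock, hacc⟩ :=
    hα'.exists_blocks_of_kstar_mul (fun h => h.2 rfl) (fun h => h.2 rfl)
  exact BA.acceptsFrom_of_deSim_of_blocks h hs0 hs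
    (fun j => (hblock j).elim (·.1) (·.1.toPath)) fun n => (hacc n).imp fun _ ⟨hj, hA⟩ => ⟨hj, hA.1⟩

/-- if `p ⊑_de q`, `L_⊤` the accepting-visiting paths `p ⇒ q` and
`L_⊥` all paths `p ⇒ q`, then `(L_⊥* L_⊤)^ω ⊆ L(q)`. -/
theorem stmt7 {A : Type u} {Q : Type v} (M : BA A Q) (hM : M.Complete)
    (p q : Q) (h : M.DeSim p q)
    (LT LB : Language A)
    (hLT : LT = {w | M.APath p w q}) (hLB : LB = {w | M.Path p w q}) :
    ∀ α : ℕ → A, BA.InOmegaPow (KStar.kstar LB * LT) α → M.AcceptsFrom q α :=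
  stmt7_general M p q h LT LB hLT hLB
end

section
/- If q ⊑_de-simulates p in a Büchi automaton A and A' is obtained from A by adding the transition r →^a p where r →^a q already exists, then the delayed simulation relation of A is included in the delayed simulation relation of A'. -/
open scoped Classical

universe u v

/-!
In `A' = A + (r →a p)` Duplicator keeps Spoiler's and her own state related by a chain
`x ⊑_de y₁ ⊑_de ⋯ ⊑_de y` of delayed simulations of `A`; a Spoiler move along the new transition
is answered as if it were `r →a q`, which prepends the link `p ⊑_de q`. An accepting Spoiler state
puts an obligation on the first link. For a link `y ⊑_de z` with `y ∈ F`, the state `z` reaches `F`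
within an ordinal attractor rank, and when it does the obligation passes to the next link; induction
on the number of links after the obligation and on that rank shows that Duplicator can force `F`.
Since `⊑_de` is defined through positional strategies, Duplicator always moves to a successor of
least attractor rank, which needs no memory.
-/

namespace BA

variable {A : Type u} {Q : Type v} {M : BA A Q}

open Relation

theorem Sim.complete {C : (ℕ → Q) → (ℕ → Q) → Prop} {x y : Q} (h : M.Sim C x y) :
    M.Complete := by
  obtain ⟨σ, hσ, -⟩ := h
  exact fun z c => ⟨σ z z c z, hσ z z c z⟩

theorem Complete.addTr (hM : M.Complete) (r : Q) (a : A) (p : Q) :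
    (M.addTr r a p).Complete :=
  fun x c => (hM x c).mono Set.subset_union_left

theorem play_cons_succ (σ : Q → Q → A → Q → Q) (y x : Q) (c : A) (α : ℕ → A)
    (ρ : ℕ → Q) (i : ℕ) :
    play σ y (Stream'.cons c α) (Stream'.cons x ρ) (i + 1) =
      play σ (σ y x c (ρ 0)) α ρ i := by
  induction i with
  | zero => rfl
  | succ i ih => exact congrArg (σ · (ρ i) (α i) (ρ (i + 1))) ih

theorem WinsFrom.step {σ : Q → Q → A → Q → Q} {x y x' : Q} {c : A}
    (h : M.WinsFrom M.CondDe σ x y) (hx' : x' ∈ M.δ x c) :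
    M.WinsFrom M.CondDe σ x' (σ y x c x') := by
  intro α ρ h0 hrun i hi
  have hrun' : M.IsRun (Stream'.cons c α) (Stream'.cons x ρ) := by
    rintro (_ | i)
    · show ρ 0 ∈ M.δ x c
      exact h0 ▸ hx'
    · exact hrun i
  obtain ⟨k, hk, hkF⟩ := h _ _ rfl hrun' (i + 1) hi
  obtain ⟨k, rfl⟩ : ∃ k', k = k' + 1 := ⟨k - 1, by omega⟩
  rw [play_cons_succ, h0] at hkF
  exact ⟨k, by omega, hkF⟩

theorem DeSim.exists_step {x y x' : Q} {c : A} (h : M.DeSim x y) (hx' : x' ∈ M.δ x c) :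
    ∃ y' ∈ M.δ y c, M.DeSim x' y' := by
  obtain ⟨σ, hσ, hwin⟩ := h
  exact ⟨σ y x c x', hσ y x c x', σ, hσ, hwin.step hx'⟩

theorem exists_run_forall_play (σ : Q → Q → A → Q → Q) {P : Q → Q → Prop}
    (hP : ∀ x y, P x y → ∃ c x', x' ∈ M.δ x c ∧ P x' (σ y x c x')) {x y : Q} (h : P x y) :
    ∃ α ρ, ρ 0 = x ∧ M.IsRun α ρ ∧ ∀ i, P (ρ i) (play σ y α ρ i) := by
  have : Nonempty A := (hP x y h).nonempty
  choose! letter next hnext hPnext using hP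
  let step : Q × Q → Q × Q := fun s =>
    (next s.1 s.2, σ s.2 s.1 (letter s.1 s.2) (next s.1 s.2))
  let pos : ℕ → Q × Q := fun i => step^[i] (x, y)
  have hpos : ∀ i, pos (i + 1) = step (pos i) := fun i => Function.iterate_succ_apply' _ _ _
  have hplay : ∀ i, P (pos i).1 (pos i).2 ∧ play σ y (fun i => letter (pos i).1 (pos i).2)
      (fun i => (pos i).1) i = (pos i).2 := by
    intro i
    induction i with
    | zero => exact ⟨h, rfl⟩
    | succ i ih =>
      refine ⟨hpos i ▸ hPnext _ _ ih.1, ?_⟩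
      rw [play, ih.2, hpos]
  refine ⟨fun i => letter (pos i).1 (pos i).2, fun i => (pos i).1, rfl, fun i => ?_,
    fun i => ?_⟩
  · show (pos (i + 1)).1 ∈ M.δ (pos i).1 (letter (pos i).1 (pos i).2)
    rw [hpos]
    exact hnext _ _ (hplay i).1
  · rw [(hplay i).2]
    exact (hplay i).1

/-- Attractor ranks: from `(x, y)` Duplicator can force her state into `F` while staying in `V`,
with rank `β` (ordinal-valued, as `M` may be infinitely branching). -/
def ForcesF (M : BA A Q) (V : Q → Q → Prop) (β : Ordinal.{max u v}) (x y : Q) : Prop :=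
  V x y ∧ (y ∈ M.F ∨ ∀ c x', x' ∈ M.δ x c →
    ∃ y' ∈ M.δ y c, ∃ γ, ∃ _ : γ < β, M.ForcesF V γ x' y')
termination_by β

variable {V : Q → Q → Prop} {β : Ordinal.{max u v}} {x y : Q}

theorem forcesF_iff : M.ForcesF V β x y ↔ V x y ∧ (y ∈ M.F ∨ ∀ c x', x' ∈ M.δ x c →
    ∃ y' ∈ M.δ y c, ∃ γ < β, M.ForcesF V γ x' y') := by
  rw [ForcesF]
  simp only [exists_prop]

theorem ForcesF.rel (h : M.ForcesF V β x y) : V x y :=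
  (forcesF_iff.1 h).1

theorem forcesF_of_mem_F (hV : V x y) (hy : y ∈ M.F) : M.ForcesF V β x y :=
  forcesF_iff.2 ⟨hV, Or.inl hy⟩

theorem exists_forcesF_of_forall (hV : V x y)
    (h : ∀ c x', x' ∈ M.δ x c → ∃ y' ∈ M.δ y c, ∃ β, M.ForcesF V β x' y') :
    ∃ β, M.ForcesF V β x y := by
  choose next hnext rank hrank using h
  refine ⟨⨆ i : Σ c, {x' // x' ∈ M.δ x c}, rank i.1 i.2 i.2.2 + 1,
    forcesF_iff.2 ⟨hV, Or.inr fun c x' hx' => ⟨next c x' hx', hnext c x' hx', rank c x' hx', ?_,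
      hrank c x' hx'⟩⟩⟩
  exact Ordinal.lt_iSup_iff.2 ⟨⟨c, x', hx'⟩, lt_add_one _⟩

theorem DeSim.exists_forcesF (h : M.DeSim x y) (hx : x ∈ M.F) :
    ∃ β, M.ForcesF M.DeSim β x y := by
  obtain ⟨σ, hσ, hwin⟩ := h
  by_contra hnot
  have hescape : ∀ x y, M.WinsFrom M.CondDe σ x y ∧ ¬(∃ β, M.ForcesF M.DeSim β x y) →
      ∃ c x', x' ∈ M.δ x c ∧ (M.WinsFrom M.CondDe σ x' (σ y x c x') ∧
        ¬(∃ β, M.ForcesF M.DeSim β x' (σ y x c x'))) := by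
    rintro x y ⟨hw, hout⟩
    by_contra! hstuck
    exact hout (exists_forcesF_of_forall ⟨σ, hσ, hw⟩ fun c x' hx' =>
      ⟨_, hσ y x c x', hstuck c x' hx' (hw.step hx')⟩)
  obtain ⟨α, ρ, h0, hrun, hout⟩ := exists_run_forall_play σ hescape ⟨hwin, hnot⟩
  obtain ⟨k, -, hk⟩ := hwin α ρ h0 hrun 0 (h0 ▸ hx)
  exact (hout k).2 ⟨0, forcesF_of_mem_F ⟨σ, hσ, (hout k).1⟩ hk⟩

theorem exists_forcesF_sInf {y x' : Q} {c : A}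
    (h : ∃ β, ∃ y' ∈ M.δ y c, M.ForcesF V β x' y') :
    ∃ y' ∈ M.δ y c, M.ForcesF V (sInf {β | ∃ y' ∈ M.δ y c, M.ForcesF V β x' y'}) x' y' :=
  csInf_mem h

noncomputable def forcingStrategy (M : BA A Q) (V : Q → Q → Prop) (hM : M.Complete) :
    Q → Q → A → Q → Q := fun y _ c x' =>
  if h : ∃ β, ∃ y' ∈ M.δ y c, M.ForcesF V β x' y' then (exists_forcesF_sInf h).choose
  else if h : ∃ y' ∈ M.δ y c, V x' y' then h.choose
  else (hM y c).choose

variable {hM : M.Complete}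

theorem isStrategy_forcingStrategy : M.IsStrategy (M.forcingStrategy V hM) := by
  intro y x c x'
  unfold forcingStrategy
  split_ifs with h h'
  · exact (exists_forcesF_sInf h).choose_spec.1
  · exact h'.choose_spec.1
  · exact (hM y c).choose_spec

theorem forcingStrategy_rel {x' : Q} {c : A} (h : ∃ y' ∈ M.δ y c, V x' y') :
    V x' (M.forcingStrategy V hM y x c x') := by
  unfold forcingStrategy
  split_ifs with h₁
  · exact (exists_forcesF_sInf h₁).choose_spec.2.rel
  · exact h.choose_spec.2

theorem forcingStrategy_forcesF {x' : Q} {c : A}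
    (h : ∃ y' ∈ M.δ y c, ∃ γ < β, M.ForcesF V γ x' y') :
    ∃ γ < β, M.ForcesF V γ x' (M.forcingStrategy V hM y x c x') := by
  obtain ⟨y', hy', γ, hγ, hforces⟩ := h
  have hex : ∃ γ, ∃ y' ∈ M.δ y c, M.ForcesF V γ x' y' := ⟨γ, y', hy', hforces⟩
  unfold forcingStrategy
  rw [dif_pos hex]
  refine ⟨_, (csInf_le' ?_).trans_lt hγ, (exists_forcesF_sInf hex).choose_spec.2⟩
  exact ⟨y', hy', hforces⟩

theorem deSim_of_forcesF (hM : M.Complete)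
    (hsafe : ∀ {x y x' c}, V x y → x' ∈ M.δ x c → ∃ y' ∈ M.δ y c, V x' y')
    (hacc : ∀ {x y}, V x y → x ∈ M.F → ∃ β, M.ForcesF V β x y) (h : V x y) :
    M.DeSim x y := by
  refine ⟨M.forcingStrategy V hM, isStrategy_forcingStrategy, fun α ρ h0 hrun => ?_⟩
  set τ := play (M.forcingStrategy V hM) y α ρ
  have hV : ∀ i, V (ρ i) (τ i) := by
    intro i
    induction i with
    | zero => exact h0 ▸ h
    | succ i ih => exact forcingStrategy_rel (hsafe ih (hrun i))
  have hreach : ∀ β i, M.ForcesF V β (ρ i) (τ i) → ∃ k ≥ i, τ k ∈ M.F := by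
    intro β
    induction β using WellFoundedLT.induction with
    | _ β ih =>
      intro i hi
      obtain ⟨-, hF | hstep⟩ := forcesF_iff.1 hi
      · exact ⟨i, le_rfl, hF⟩
      · obtain ⟨γ, hγ, hnext⟩ := forcingStrategy_forcesF (hstep _ _ (hrun i))
        obtain ⟨k, hk, hkF⟩ := ih γ hγ (i + 1) hnext
        exact ⟨k, by omega, hkF⟩
  intro i hi
  obtain ⟨β, hβ⟩ := hacc (hV i) hi
  exact hreach β i hβ

def DeSimChain (M : BA A Q) : ℕ → Q → Q → Prop
  | 0 => Eq
  | n + 1 => Relation.Comp M.DeSim (M.DeSimChain n)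

theorem DeSimChain.reflTransGen : ∀ {n : ℕ} {x y : Q}, M.DeSimChain n x y →
    ReflTransGen M.DeSim x y
  | 0, _, _, rfl => .refl
  | _ + 1, _, _, ⟨_, hxz, hzy⟩ => .head hxz hzy.reflTransGen

theorem exists_deSimChain_of_reflTransGen (h : ReflTransGen M.DeSim x y) :
    ∃ n, M.DeSimChain n x y := by
  induction h using ReflTransGen.head_induction_on with
  | refl => exact ⟨0, rfl⟩
  | head hxz _ ih =>
    obtain ⟨n, hn⟩ := ih
    exact ⟨n + 1, _, hxz, hn⟩

theorem DeSimChain.exists_step : ∀ {n : ℕ} {x y x' : Q} {c : A}, M.DeSimChain n x y →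
    x' ∈ M.δ x c → ∃ y' ∈ M.δ y c, M.DeSimChain n x' y'
  | 0, _, _, x', _, rfl, hx' => ⟨x', hx', rfl⟩
  | _ + 1, _, _, _, _, ⟨_, hxz, hzy⟩, hx' =>
    let ⟨z', hz', hxz'⟩ := hxz.exists_step hx'
    let ⟨y', hy', hzy'⟩ := hzy.exists_step hz'
    ⟨y', hy', z', hxz', hzy'⟩

section AddTransition

variable {p q r : Q} {a : A}

theorem exists_reflTransGen_deSim_addTr_step (hq : q ∈ M.δ r a) (hsim : M.DeSim p q)
    {x' : Q} {c : A} (h : ReflTransGen M.DeSim x y)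
    (hx' : x' ∈ (M.addTr r a p).δ x c) : ∃ y' ∈ M.δ y c, ReflTransGen M.DeSim x' y' := by
  obtain ⟨n, hn⟩ := exists_deSimChain_of_reflTransGen h
  rcases hx' with hx' | ⟨rfl, rfl, rfl⟩
  · obtain ⟨y', hy', hxy'⟩ := hn.exists_step hx'
    exact ⟨y', hy', hxy'.reflTransGen⟩
  · obtain ⟨y', hy', hqy'⟩ := hn.exists_step hq
    exact ⟨y', hy', .head hsim hqy'.reflTransGen⟩

theorem exists_forcesF_addTr_of_forcesF (hq : q ∈ M.δ r a) (hsim : M.DeSim p q) {n : ℕ}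
    {z u : Q}
    (hF : ∀ {x z u}, ReflTransGen M.DeSim x z → z ∈ M.F → M.DeSimChain n z u →
      ∃ β, (M.addTr r a p).ForcesF (ReflTransGen M.DeSim) β x u)
    (h : M.ForcesF M.DeSim β y z) (hxy : ReflTransGen M.DeSim x y) (hzu : M.DeSimChain n z u) :
    ∃ β', (M.addTr r a p).ForcesF (ReflTransGen M.DeSim) β' x u := by
  induction β using WellFoundedLT.induction generalizing x y z u with
  | _ β ih =>
    obtain ⟨hyz, hz | hstep⟩ := forcesF_iff.1 h
    · exact hF (hxy.tail hyz) hz hzu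
    · refine exists_forcesF_of_forall ((hxy.tail hyz).trans hzu.reflTransGen)
        fun c x' hx' => ?_
      obtain ⟨y', hy', hxy'⟩ := exists_reflTransGen_deSim_addTr_step hq hsim hxy hx'
      obtain ⟨z', hz', γ, hγ, hyz'⟩ := hstep c y' hy'
      obtain ⟨u', hu', hzu'⟩ := hzu.exists_step hz'
      exact ⟨u', Or.inl hu', ih γ hγ hyz' hxy' hzu'⟩

theorem exists_forcesF_addTr_of_mem_F (hq : q ∈ M.δ r a) (hsim : M.DeSim p q) {n : ℕ}
    {z u : Q} (hxz : ReflTransGen M.DeSim x z) (hz : z ∈ M.F) (hzu : M.DeSimChain n z u) :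
    ∃ β, (M.addTr r a p).ForcesF (ReflTransGen M.DeSim) β x u := by
  induction n generalizing x z u with
  | zero =>
    cases hzu
    exact ⟨0, forcesF_of_mem_F hxz hz⟩
  | succ n ih =>
    obtain ⟨z₁, hzz₁, hz₁u⟩ := hzu
    obtain ⟨β, hβ⟩ := hzz₁.exists_forcesF hz
    exact exists_forcesF_addTr_of_forcesF hq hsim ih hβ hxz hz₁u

end AddTransition

end BA

theorem stmt9_general {A : Type u} {Q : Type v} (M : BA A Q)
    (p q r : Q) (a : A) (hq : q ∈ M.δ r a) (hsim : M.DeSim p q) :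
    ∀ s t : Q, M.DeSim s t → (M.addTr r a p).DeSim s t := by
  intro s t hst
  refine BA.deSim_of_forcesF (hsim.complete.addTr r a p) (fun hxy hx' => ?_) (fun hxy hx => ?_)
    (Relation.ReflTransGen.single hst)
  · obtain ⟨y', hy', hxy'⟩ := BA.exists_reflTransGen_deSim_addTr_step hq hsim hxy hx'
    exact ⟨y', Or.inl hy', hxy'⟩
  · obtain ⟨n, hn⟩ := BA.exists_deSimChain_of_reflTransGen hxy
    exact BA.exists_forcesF_addTr_of_mem_F hq hsim .refl hx hn

/-- adding the transition `r →a p` (with `r →a q ∈ δ` and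
`p ⊑_de q`) only enlarges the delayed simulation: `⊑_de(A) ⊆ ⊑_de(A')`. -/
theorem stmt9 {A : Type u} {Q : Type v} (M : BA A Q) (hM : M.Complete)
    (p q r : Q) (a : A) (hq : q ∈ M.δ r a) (hsim : M.DeSim p q) :
    ∀ s t : Q, M.DeSim s t → (M.addTr r a p).DeSim s t :=
  stmt9_general M p q r a hq hsim
end

section
/- Let ≃_x be the similarity equivalence (symmetric fragment) of the direct or delayed simulation preorder ⊑_x on a Büchi automaton A, and let A/≃_x be the quotient automaton. Then the relation defined on equivalence classes by [q] ⊑ [r] iff q ⊑_x r is well-defined and equals the maximal x-simulation on A/≃_x. -/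
open scoped Classical

universe u v

/-! ### Auxiliary development for stmt10 -/

namespace BA

variable {A : Type u} {Q : Type v}

section Basic

variable {M : BA A Q}

lemma play_isRun {σ : Q → Q → A → Q → Q} (hσ : M.IsStrategy σ) (q : Q)
    (α : ℕ → A) (ρ : ℕ → Q) : M.IsRun α (play σ q α ρ) :=
  fun i => hσ _ _ _ _

lemma winsFrom_extend {C : (ℕ → Q) → (ℕ → Q) → Prop}
    (hC : ∀ ρ τ : ℕ → Q, C ρ τ → C (fun i => ρ (i + 1)) (fun i => τ (i + 1)))
    {σ : Q → Q → A → Q → Q} {p q : Q}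
    (hw : M.WinsFrom C σ p q) {a : A} {p' : Q} (hp' : p' ∈ M.δ p a) :
    M.WinsFrom C σ p' (σ q p a p') := by
  intro α' ρ' h0 hr
  let α : ℕ → A := fun i => Nat.casesOn i a (fun j => α' j)
  let ρ : ℕ → Q := fun i => Nat.casesOn i p (fun j => ρ' j)
  have hrun : M.IsRun α ρ := by
    intro i
    cases i with
    | zero => show ρ' 0 ∈ M.δ p a; rw [h0]; exact hp'
    | succ j => exact hr j
  have hplay : ∀ i, play σ q α ρ (i + 1) = play σ (σ q p a p') α' ρ' i := by
    intro i; induction i with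
    | zero => show σ q p a (ρ' 0) = σ q p a p'; rw [h0]
    | succ j ih =>
        show σ (play σ q α ρ (j + 1)) (ρ' j) (α' j) (ρ' (j + 1)) = _
        rw [ih]; rfl
  have hCres := hC _ _ (hw α ρ rfl hrun)
  have e1 : (fun i => ρ (i + 1)) = ρ' := rfl
  have e2 : (fun i => play σ q α ρ (i + 1)) = play σ (σ q p a p') α' ρ' :=
    funext hplay
  rwa [e1, e2] at hCres

lemma condDi_shift : ∀ ρ τ : ℕ → Q, M.CondDi ρ τ →
    M.CondDi (fun i => ρ (i + 1)) (fun i => τ (i + 1)) :=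
  fun _ _ h i hF => h (i + 1) hF

lemma condDe_shift : ∀ ρ τ : ℕ → Q, M.CondDe ρ τ →
    M.CondDe (fun i => ρ (i + 1)) (fun i => τ (i + 1)) := by
  intro ρ τ h i hF
  obtain ⟨k, hk, hkF⟩ := h (i + 1) hF
  refine ⟨k - 1, by omega, ?_⟩
  have : k - 1 + 1 = k := by omega
  simpa [this] using hkF

end Basic

/-- `R` is closed under simulation steps. -/
def StepClosed (M : BA A Q) (R : Q → Q → Prop) : Prop :=
  ∀ u v, R u v → ∀ a u', u' ∈ M.δ u a → ∃ v', v' ∈ M.δ v a ∧ R u' v'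

/-- Characterization of direct-simulation relations. -/
def DiChar (M : BA A Q) (R : Q → Q → Prop) : Prop :=
  M.StepClosed R ∧ ∀ u v, R u v → u ∈ M.F → v ∈ M.F

section Direct

variable {M : BA A Q}

lemma di_of_char (hM : M.Complete) {R : Q → Q → Prop} (hR : M.DiChar R)
    {p q : Q} (hpq : R p q) : M.DiSim p q := by
  classical
  set σ : Q → Q → A → Q → Q := fun r p a p' =>
    if h : ∃ r', r' ∈ M.δ r a ∧ R p' r' then h.choose else (hM r a).choose
    with hσdef
  have hstrat : M.IsStrategy σ := by
    intro r p a p'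
    simp only [hσdef]
    by_cases h : ∃ r', r' ∈ M.δ r a ∧ R p' r'
    · rw [dif_pos h]; exact h.choose_spec.1
    · rw [dif_neg h]; exact (hM r a).choose_spec
  refine ⟨σ, hstrat, ?_⟩
  intro α ρ h0 hr
  have inv : ∀ i, R (ρ i) (play σ q α ρ i) := by
    intro i; induction i with
    | zero => rw [h0]; exact hpq
    | succ j ih =>
        obtain ⟨v', hv', hRv⟩ := hR.1 _ _ ih (α j) _ (hr j)
        have hex : ∃ r', r' ∈ M.δ (play σ q α ρ j) (α j) ∧ R (ρ (j + 1)) r' :=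
          ⟨v', hv', hRv⟩
        show R (ρ (j + 1)) (σ (play σ q α ρ j) (ρ j) (α j) (ρ (j + 1)))
        simp only [hσdef]
        rw [dif_pos hex]
        exact hex.choose_spec.2
  intro i hF
  exact hR.2 _ _ (inv i) hF

lemma di_char [Nonempty A] (hM : M.Complete) : M.DiChar M.DiSim := by
  constructor
  · rintro u v ⟨σ, hσ, hw⟩ a u' hu'
    exact ⟨σ v u a u', hσ v u a u', σ, hσ, winsFrom_extend condDi_shift hw hu'⟩
  · rintro u v ⟨σ, hσ, hw⟩ hu
    obtain ⟨a⟩ := ‹Nonempty A›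
    classical
    let ρ : ℕ → Q := fun i => Nat.rec u (fun _ x => (hM x a).choose) i
    have hr : M.IsRun (fun _ => a) ρ := fun i => (hM (ρ i) a).choose_spec
    exact hw (fun _ => a) ρ rfl hr 0 hu

lemma di_trans [Nonempty A] (hM : M.Complete) {p q r : Q}
    (h1 : M.DiSim p q) (h2 : M.DiSim q r) : M.DiSim p r := by
  have hc := di_char (M := M) hM
  refine di_of_char hM (R := fun x z => ∃ y, M.DiSim x y ∧ M.DiSim y z)
    ⟨?_, ?_⟩ ⟨q, h1, h2⟩
  · rintro u w ⟨y, hy1, hy2⟩ a u' hu'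
    obtain ⟨y', hy', h1'⟩ := hc.1 u y hy1 a u' hu'
    obtain ⟨w', hw', h2'⟩ := hc.1 y w hy2 a y' hy'
    exact ⟨w', hw', y', h1', h2'⟩
  · rintro u w ⟨y, hy1, hy2⟩ hu
    exact hc.2 y w hy2 (hc.2 u y hy1 hu)

end Direct

end BA

namespace BA

variable {A : Type u} {Q : Type v}

/-- Attractor for delayed simulation: Duplicator can force a visit to `F`
while keeping the pair in `R`. -/
inductive DeAttr (M : BA A Q) (R : Q → Q → Prop) : Q → Q → Prop
  | base {u v : Q} : R u v → v ∈ M.F → DeAttr M R u v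
  | step {u v : Q} (V : A → Q → Q) : R u v →
      (∀ a u', u' ∈ M.δ u a → V a u' ∈ M.δ v a) →
      (∀ a u', u' ∈ M.δ u a → R u' (V a u')) →
      (∀ a u', u' ∈ M.δ u a → DeAttr M R u' (V a u')) → DeAttr M R u v

lemma DeAttr.rel {M : BA A Q} {R : Q → Q → Prop} {u v : Q}
    (h : M.DeAttr R u v) : R u v := by
  cases h with
  | base hR _ => exact hR
  | step V hR _ _ _ => exact hR

lemma DeAttr.step' {M : BA A Q} {R : Q → Q → Prop} {u v : Q} (hR : R u v)
    (h : ∀ a u', u' ∈ M.δ u a →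
      ∃ v', v' ∈ M.δ v a ∧ R u' v' ∧ M.DeAttr R u' v') : M.DeAttr R u v := by
  classical
  refine DeAttr.step
    (fun a u' => if hh : u' ∈ M.δ u a then (h a u' hh).choose else v) hR ?_ ?_ ?_ <;>
    intro a u' hu' <;> simp only [dif_pos hu']
  · exact (h a u' hu').choose_spec.1
  · exact (h a u' hu').choose_spec.2.1
  · exact (h a u' hu').choose_spec.2.2

/-- Characterization of delayed-simulation relations. -/
def DeChar (M : BA A Q) (R : Q → Q → Prop) : Prop :=
  M.StepClosed R ∧ ∀ u v, R u v → u ∈ M.F → M.DeAttr R u v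

/-- Ranked attractor. -/
inductive AttrRk (M : BA A Q) (R : Q → Q → Prop) :
    Q → Q → Ordinal.{max u v} → Prop
  | base {u v : Q} {o : Ordinal.{max u v}} : R u v → v ∈ M.F → AttrRk M R u v o
  | step {u v : Q} {o : Ordinal.{max u v}} (V : A → Q → Q)
      (O : A → Q → Ordinal.{max u v}) : R u v →
      (∀ a u', u' ∈ M.δ u a → V a u' ∈ M.δ v a) →
      (∀ a u', u' ∈ M.δ u a → R u' (V a u')) →
      (∀ a u', u' ∈ M.δ u a → O a u' < o) →
      (∀ a u', u' ∈ M.δ u a → AttrRk M R u' (V a u') (O a u')) →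
      AttrRk M R u v o

lemma deAttr_rank {M : BA A Q} {R : Q → Q → Prop} {u v : Q}
    (h : M.DeAttr R u v) : ∃ o, M.AttrRk R u v o := by
  induction h with
  | base hR hF => exact ⟨0, AttrRk.base hR hF⟩
  | @step u v V hR hδ hRV hA ih =>
    classical
    let O : A → Q → Ordinal.{max u v} := fun a u' =>
      if hh : u' ∈ M.δ u a then (ih a u' hh).choose else 0
    refine ⟨iSup (fun x : A × Q => O x.1 x.2 + 1), ?_⟩
    refine AttrRk.step V O hR hδ hRV ?_ ?_
    · intro a u' hu'
      have hle : O a u' + 1 ≤ iSup (fun x : A × Q => O x.1 x.2 + 1) :=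
        le_ciSup (Ordinal.bddAbove_range _) (⟨a, u'⟩ : A × Q)
      have : O a u' < O a u' + 1 := by
        rw [Ordinal.add_one_eq_succ]; exact Order.lt_succ _
      exact lt_of_lt_of_le this hle
    · intro a u' hu'
      have : O a u' = (ih a u' hu').choose := dif_pos hu'
      rw [this]
      exact (ih a u' hu').choose_spec

/-- The minimal attractor rank. -/
noncomputable def rkOf (M : BA A Q) (R : Q → Q → Prop) (u v : Q) :
    Ordinal.{max u v} :=
  sInf {o | M.AttrRk R u v o}

lemma rk_attr {M : BA A Q} {R : Q → Q → Prop} {u v : Q}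
    (h : ∃ o, M.AttrRk R u v o) : M.AttrRk R u v (M.rkOf R u v) :=
  csInf_mem h

lemma rk_le {M : BA A Q} {R : Q → Q → Prop} {u v : Q} {o : Ordinal.{max u v}}
    (h : M.AttrRk R u v o) : M.rkOf R u v ≤ o :=
  csInf_le (OrderBot.bddBelow _) h

/-- Existence of a rank-minimal choice among attractor candidates. -/
lemma exists_min {M : BA A Q} {R : Q → Q → Prop} (r : Q) (a : A) (p' : Q)
    (h : ∃ r', r' ∈ M.δ r a ∧ R p' r' ∧ ∃ o, M.AttrRk R p' r' o) :
    ∃ r', (r' ∈ M.δ r a ∧ R p' r' ∧ ∃ o, M.AttrRk R p' r' o) ∧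
      ∀ r'' o, r'' ∈ M.δ r a → R p' r'' → M.AttrRk R p' r'' o →
        M.rkOf R p' r' ≤ o := by
  classical
  set T : Set Q := {r' | r' ∈ M.δ r a ∧ R p' r' ∧ ∃ o, M.AttrRk R p' r' o} with hT
  have hTne : T.Nonempty := h
  have hSne : ((fun r' => M.rkOf R p' r') '' T).Nonempty := hTne.image _
  obtain ⟨r', hr'T, hr'min⟩ := csInf_mem hSne
  refine ⟨r', hr'T, ?_⟩
  intro r'' o hδ hR hA
  have hmem : M.rkOf R p' r'' ∈ (fun r' => M.rkOf R p' r') '' T :=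
    ⟨r'', ⟨hδ, hR, o, hA⟩, rfl⟩
  have hmin : M.rkOf R p' r' = sInf ((fun r' => M.rkOf R p' r') '' T) := by rw [← hr'min]
  calc M.rkOf R p' r' = sInf ((fun r' => M.rkOf R p' r') '' T) := hmin
    _ ≤ M.rkOf R p' r'' := csInf_le (OrderBot.bddBelow _) hmem
    _ ≤ o := rk_le hA

/-- The strategy extracted from a delayed-simulation characterization. -/
noncomputable def charStrat (M : BA A Q) (hM : M.Complete) (R : Q → Q → Prop) :
    Q → Q → A → Q → Q := fun r p a p' =>
  if h1 : ∃ r', (r' ∈ M.δ r a ∧ R p' r' ∧ ∃ o, M.AttrRk R p' r' o) ∧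
      ∀ r'' o, r'' ∈ M.δ r a → R p' r'' → M.AttrRk R p' r'' o →
        M.rkOf R p' r' ≤ o then
    h1.choose
  else if h2 : ∃ r', r' ∈ M.δ r a ∧ R p' r' then h2.choose
  else (hM r a).choose

lemma charStrat_strategy (M : BA A Q) (hM : M.Complete) (R : Q → Q → Prop) :
    M.IsStrategy (charStrat M hM R) := by
  intro r p a p'
  unfold charStrat
  by_cases h1 : ∃ r', (r' ∈ M.δ r a ∧ R p' r' ∧ ∃ o, M.AttrRk R p' r' o) ∧
      ∀ r'' o, r'' ∈ M.δ r a → R p' r'' → M.AttrRk R p' r'' o →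
        M.rkOf R p' r' ≤ o
  · rw [dif_pos h1]; exact h1.choose_spec.1.1
  · rw [dif_neg h1]
    by_cases h2 : ∃ r', r' ∈ M.δ r a ∧ R p' r'
    · rw [dif_pos h2]; exact h2.choose_spec.1
    · rw [dif_neg h2]; exact (hM r a).choose_spec

lemma charStrat_reach {M : BA A Q} (hM : M.Complete) {R : Q → Q → Prop}
    (o : Ordinal.{max u v}) : ∀ (α : ℕ → A) (ρ τ : ℕ → Q),
    (∀ i, τ (i + 1) = charStrat M hM R (τ i) (ρ i) (α i) (ρ (i + 1))) →
    M.IsRun α ρ → ∀ j, M.AttrRk R (ρ j) (τ j) o → ∃ k ≥ j, τ k ∈ M.F := by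
  induction o using Ordinal.induction with
  | _ o ih =>
  intro α ρ τ hτ hrun j hA
  cases hA with
  | base hRuv hF => exact ⟨j, le_rfl, hF⟩
  | step V O hRuv hδ hRV hO hAs =>
    have hmove := hrun j
    have hex : ∃ r', r' ∈ M.δ (τ j) (α j) ∧ R (ρ (j + 1)) r' ∧
        ∃ o', M.AttrRk R (ρ (j + 1)) r' o' :=
      ⟨V (α j) (ρ (j + 1)), hδ _ _ hmove, hRV _ _ hmove,
        O (α j) (ρ (j + 1)), hAs _ _ hmove⟩
    have h1 := exists_min (τ j) (α j) (ρ (j + 1)) hex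
    have hτ1 : τ (j + 1) = h1.choose := by
      rw [hτ j]; unfold charStrat; rw [dif_pos h1]
    have hAttr' : M.AttrRk R (ρ (j + 1)) (τ (j + 1))
        (M.rkOf R (ρ (j + 1)) (τ (j + 1))) := by
      rw [hτ1]; exact rk_attr h1.choose_spec.1.2.2
    have hlt : M.rkOf R (ρ (j + 1)) (τ (j + 1)) < o := by
      rw [hτ1]
      exact lt_of_le_of_lt
        (h1.choose_spec.2 (V (α j) (ρ (j + 1))) (O (α j) (ρ (j + 1)))
          (hδ _ _ hmove) (hRV _ _ hmove) (hAs _ _ hmove)) (hO _ _ hmove)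
    obtain ⟨k, hk, hkF⟩ := ih _ hlt α ρ τ hτ hrun (j + 1) hAttr'
    exact ⟨k, by omega, hkF⟩

lemma de_of_char {M : BA A Q} (hM : M.Complete) {R : Q → Q → Prop}
    (hR : M.DeChar R) {p q : Q} (hpq : R p q) : M.DeSim p q := by
  classical
  refine ⟨charStrat M hM R, charStrat_strategy M hM R, ?_⟩
  intro α ρ h0 hrun
  set τ : ℕ → Q := play (charStrat M hM R) q α ρ with hτdef
  have hτ : ∀ i, τ (i + 1) = charStrat M hM R (τ i) (ρ i) (α i) (ρ (i + 1)) :=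
    fun i => rfl
  have inv : ∀ i, R (ρ i) (τ i) := by
    intro i; induction i with
    | zero => rw [h0]; exact hpq
    | succ j ihj =>
        obtain ⟨v', hv', hRv⟩ := hR.1 _ _ ihj (α j) _ (hrun j)
        rw [hτ j]
        unfold charStrat
        by_cases h1 : ∃ r', (r' ∈ M.δ (τ j) (α j) ∧ R (ρ (j + 1)) r' ∧
            ∃ o, M.AttrRk R (ρ (j + 1)) r' o) ∧
            ∀ r'' o, r'' ∈ M.δ (τ j) (α j) → R (ρ (j + 1)) r'' →
              M.AttrRk R (ρ (j + 1)) r'' o →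
              M.rkOf R (ρ (j + 1)) r' ≤ o
        · rw [dif_pos h1]; exact h1.choose_spec.1.2.1
        · rw [dif_neg h1]
          have h2 : ∃ r', r' ∈ M.δ (τ j) (α j) ∧ R (ρ (j + 1)) r' := ⟨v', hv', hRv⟩
          rw [dif_pos h2]; exact h2.choose_spec.2
  intro i hF
  obtain ⟨o, ho⟩ := deAttr_rank (hR.2 _ _ (inv i) hF)
  exact charStrat_reach hM o α ρ τ hτ hrun i ho

/-- Strategy-specific attractor. -/
inductive AttrS (M : BA A Q) (σ : Q → Q → A → Q → Q) : Q → Q → Prop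
  | base {u v : Q} : v ∈ M.F → AttrS M σ u v
  | step {u v : Q} : (∀ a u', u' ∈ M.δ u a → AttrS M σ u' (σ v u a u')) →
      AttrS M σ u v

lemma attrS_of_wins {M : BA A Q} {σ : Q → Q → A → Q → Q}
    (hσ : M.IsStrategy σ) {u v : Q} (hw : M.WinsFrom M.CondDe σ u v)
    (hu : u ∈ M.F) : M.AttrS σ u v := by
  classical
  by_contra hcon
  have hstep : ∀ x : Q × Q, ¬ M.AttrS σ x.1 x.2 →
      x.2 ∉ M.F ∧ ∃ y : A × Q, y.2 ∈ M.δ x.1 y.1 ∧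
        ¬ M.AttrS σ y.2 (σ x.2 x.1 y.1 y.2) := by
    intro x hx
    constructor
    · intro hF; exact hx (AttrS.base hF)
    · by_contra h
      push_neg at h
      exact hx (AttrS.step (fun a u' h' => h (a, u') h'))
  let T := {x : Q × Q // ¬ M.AttrS σ x.1 x.2}
  have next : ∀ x : T, ∃ y : A × Q, y.2 ∈ M.δ x.1.1 y.1 ∧
      ¬ M.AttrS σ y.2 (σ x.1.2 x.1.1 y.1 y.2) := fun x => (hstep x.1 x.2).2
  let f : T → T := fun x =>
    ⟨((next x).choose.2, σ x.1.2 x.1.1 (next x).choose.1 (next x).choose.2),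
      (next x).choose_spec.2⟩
  let s : ℕ → T := fun n => f^[n] ⟨(u, v), hcon⟩
  have hs : ∀ n, s (n + 1) = f (s n) := fun n =>
    Function.iterate_succ_apply' f n _
  let α : ℕ → A := fun n => (next (s n)).choose.1
  let ρ : ℕ → Q := fun n => (s n).1.1
  have hrun : M.IsRun α ρ := by
    intro n
    have hmem := (next (s n)).choose_spec.1
    have e : ρ (n + 1) = (next (s n)).choose.2 := by
      show (s (n + 1)).1.1 = _
      rw [hs n]
    rw [e]
    exact hmem
  have hplay : ∀ n, play σ v α ρ n = (s n).1.2 := by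
    intro n; induction n with
    | zero => rfl
    | succ j ih =>
        have e : ρ (j + 1) = (next (s j)).choose.2 := by
          show (s (j + 1)).1.1 = _
          rw [hs j]
        show σ (play σ v α ρ j) (ρ j) (α j) (ρ (j + 1)) = (s (j + 1)).1.2
        rw [ih, e, hs j]
  have hnotF : ∀ n, (s n).1.2 ∉ M.F := fun n => (hstep _ (s n).2).1
  obtain ⟨k, _, hkF⟩ := hw α ρ rfl hrun 0 hu
  rw [hplay k] at hkF
  exact hnotF k hkF

lemma deAttr_of_attrS {M : BA A Q} {σ : Q → Q → A → Q → Q}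
    (hσ : M.IsStrategy σ) {u v : Q} (h : M.AttrS σ u v)
    (hw : M.WinsFrom M.CondDe σ u v) : M.DeAttr M.DeSim u v := by
  induction h with
  | @base u v hF => exact DeAttr.base ⟨σ, hσ, hw⟩ hF
  | @step u v hstep ih =>
    exact DeAttr.step (fun a u' => σ v u a u') ⟨σ, hσ, hw⟩
      (fun a u' _ => hσ v u a u')
      (fun a u' h' => ⟨σ, hσ, winsFrom_extend condDe_shift hw h'⟩)
      (fun a u' h' => ih a u' h' (winsFrom_extend condDe_shift hw h'))

lemma de_char {M : BA A Q} : M.DeChar M.DeSim := by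
  constructor
  · rintro u v ⟨σ, hσ, hw⟩ a u' hu'
    exact ⟨σ v u a u', hσ v u a u', σ, hσ, winsFrom_extend condDe_shift hw hu'⟩
  · rintro u v ⟨σ, hσ, hw⟩ hu
    exact deAttr_of_attrS hσ (attrS_of_wins hσ hw hu) hw

lemma de_refl {M : BA A Q} (hM : M.Complete) (p : Q) : M.DeSim p p := by
  refine de_of_char hM (R := fun x y => x = y) ⟨?_, ?_⟩ rfl
  · rintro u v rfl a u' hu'; exact ⟨u', hu', rfl⟩
  · rintro u v rfl hu; exact DeAttr.base rfl hu

section Trans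

variable {M : BA A Q}

private lemma de_comp_aux2 : ∀ {y w : Q}, M.DeAttr M.DeSim y w → ∀ {u : Q},
    M.DeSim u y → M.DeAttr (fun x z => ∃ t, M.DeSim x t ∧ M.DeSim t z) u w := by
  intro y w h
  induction h with
  | @base y w hR hF => intro u hu; exact DeAttr.base ⟨y, hu, hR⟩ hF
  | @step y w V hR hδ hRV hA ih =>
    intro u hu
    refine DeAttr.step' ⟨y, hu, hR⟩ ?_
    intro a u' hu'
    obtain ⟨y', hy', huy'⟩ := de_char.1 u y hu a u' hu'
    exact ⟨V a y', hδ a y' hy', ⟨y', huy', hRV a y' hy'⟩, ih a y' hy' huy'⟩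

private lemma de_comp_aux1 : ∀ {u y : Q}, M.DeAttr M.DeSim u y → ∀ {w : Q},
    M.DeSim y w → M.DeAttr (fun x z => ∃ t, M.DeSim x t ∧ M.DeSim t z) u w := by
  intro u y h
  induction h with
  | @base u y hR hF =>
    intro w hw
    exact de_comp_aux2 (de_char.2 y w hw hF) hR
  | @step u y V hR hδ hRV hA ih =>
    intro w hw
    refine DeAttr.step' ⟨y, hR, hw⟩ ?_
    intro a u' hu'
    obtain ⟨w', hw', hyw'⟩ := de_char.1 y w hw a (V a u') (hδ a u' hu')
    exact ⟨w', hw', ⟨V a u', hRV a u' hu', hyw'⟩, ih a u' hu' hyw'⟩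

lemma de_comp_char : M.DeChar (fun x z => ∃ t, M.DeSim x t ∧ M.DeSim t z) := by
  constructor
  · rintro u w ⟨y, h1, h2⟩ a u' hu'
    obtain ⟨y', hy', h1'⟩ := de_char.1 u y h1 a u' hu'
    obtain ⟨w', hw', h2'⟩ := de_char.1 y w h2 a y' hy'
    exact ⟨w', hw', y', h1', h2'⟩
  · rintro u w ⟨y, h1, h2⟩ hu
    exact de_comp_aux1 (de_char.2 u y h1 hu) h2

lemma de_trans (hM : M.Complete) {p q r : Q} (h1 : M.DeSim p q)
    (h2 : M.DeSim q r) : M.DeSim p r :=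
  de_of_char hM de_comp_char ⟨q, h1, h2⟩

end Trans

end BA

namespace BA

variable {A : Type u} {Q : Type v}

section QuotAux

variable {M : BA A Q}

lemma quot_complete (s : Setoid Q) (hM : M.Complete) : (M.quotBA s).Complete := by
  intro c a
  induction c using Quotient.ind with
  | _ u =>
    exact ⟨Quotient.mk s (hM u a).choose,
      u, (hM u a).choose, rfl, rfl, (hM u a).choose_spec⟩

section DirectQuot

variable {sdi : Setoid Q} (hdi : ∀ u v : Q, sdi.r u v ↔ (M.DiSim u v ∧ M.DiSim v u))

include hdi

lemma di_quot_of [Nonempty A] (hM : M.Complete) {q r : Q} (h : M.DiSim q r) :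
    (M.quotBA sdi).DiSim (Quotient.mk sdi q) (Quotient.mk sdi r) := by
  have hc := di_char (M := M) hM
  refine di_of_char (quot_complete sdi hM)
    (R := fun c d => ∃ u v, Quotient.mk sdi u = c ∧ Quotient.mk sdi v = d ∧ M.DiSim u v)
    ⟨?_, ?_⟩ ⟨q, r, rfl, rfl, h⟩
  · rintro c d ⟨u, v, rfl, rfl, huv⟩ a c' hc'
    obtain ⟨w, w', hw, rfl, hstep⟩ := hc'
    have hwu : M.DiSim w u := ((hdi w u).1 (Quotient.exact hw)).1
    obtain ⟨v', hv', hwv'⟩ := hc.1 w v (di_trans hM hwu huv) a w' hstep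
    exact ⟨Quotient.mk sdi v', ⟨v, v', rfl, rfl, hv'⟩, w', v', rfl, rfl, hwv'⟩
  · rintro c d ⟨u, v, rfl, rfl, huv⟩ ⟨u0, hu0F, hu0⟩
    have h0 : M.DiSim u0 v :=
      di_trans hM ((hdi u0 u).1 (Quotient.exact hu0)).1 huv
    exact ⟨v, hc.2 u0 v h0 hu0F, rfl⟩

lemma di_quot_to [Nonempty A] (hM : M.Complete) {q r : Q}
    (h : (M.quotBA sdi).DiSim (Quotient.mk sdi q) (Quotient.mk sdi r)) :
    M.DiSim q r := by
  have hcq := di_char (M := M.quotBA sdi) (quot_complete sdi hM)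
  have hc := di_char (M := M) hM
  refine di_of_char hM
    (R := fun u v => (M.quotBA sdi).DiSim (Quotient.mk sdi u) (Quotient.mk sdi v))
    ⟨?_, ?_⟩ h
  · intro u v huv a u' hu'
    have hmove : Quotient.mk sdi u' ∈ (M.quotBA sdi).δ (Quotient.mk sdi u) a :=
      ⟨u, u', rfl, rfl, hu'⟩
    obtain ⟨d', hd', hsim'⟩ := hcq.1 _ _ huv a _ hmove
    obtain ⟨w, w', hw, hw', hstep⟩ := hd'
    have hwv : M.DiSim w v := ((hdi w v).1 (Quotient.exact hw)).1
    obtain ⟨v', hv', hwv'⟩ := hc.1 w v hwv a w' hstep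
    refine ⟨v', hv', ?_⟩
    rw [← hw'] at hsim'
    exact di_trans (quot_complete sdi hM) hsim' (di_quot_of hdi hM hwv')
  · intro u v huv huF
    obtain ⟨v0, hv0F, hv0⟩ := hcq.2 _ _ huv ⟨u, huF, rfl⟩
    exact hc.2 v0 v ((hdi v0 v).1 (Quotient.exact hv0)).1 hv0F

end DirectQuot

section DelayedQuot

variable {sde : Setoid Q} (hde : ∀ u v : Q, sde.r u v ↔ (M.DeSim u v ∧ M.DeSim v u))

include hde

lemma de_quot_L1 (hM : M.Complete) : ∀ {x v : Q}, M.DeAttr M.DeSim x v →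
    ∀ {c d : Quotient sde}, (∃ w, Quotient.mk sde w = c ∧ M.DeSim w x) →
    Quotient.mk sde v = d →
    (M.quotBA sde).DeAttr
      (fun c d => ∃ u v, Quotient.mk sde u = c ∧ Quotient.mk sde v = d ∧ M.DeSim u v)
      c d := by
  intro x v h
  induction h with
  | @base x v hR hF =>
    rintro c d ⟨w, rfl, hwx⟩ rfl
    exact DeAttr.base ⟨w, v, rfl, rfl, de_trans hM hwx hR⟩ ⟨v, hF, rfl⟩
  | @step x v V hR hδ hRV hA ih =>
    rintro c d ⟨w, rfl, hwx⟩ rfl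
    refine DeAttr.step' ⟨w, v, rfl, rfl, de_trans hM hwx hR⟩ ?_
    rintro a c' ⟨w₂, w₂', hw₂, rfl, hst⟩
    have hw₂x : M.DeSim w₂ x :=
      de_trans hM ((hde w₂ w).1 (Quotient.exact hw₂)).1 hwx
    obtain ⟨x', hx', hw₂'x'⟩ := de_char.1 w₂ x hw₂x a w₂' hst
    refine ⟨Quotient.mk sde (V a x'), ⟨v, V a x', rfl, rfl, hδ a x' hx'⟩,
      ⟨w₂', V a x', rfl, rfl, de_trans hM hw₂'x' (hRV a x' hx')⟩,
      ih a x' hx' ⟨w₂', rfl, hw₂'x'⟩ rfl⟩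

lemma de_quot_of (hM : M.Complete) {q r : Q} (h : M.DeSim q r) :
    (M.quotBA sde).DeSim (Quotient.mk sde q) (Quotient.mk sde r) := by
  refine de_of_char (quot_complete sde hM)
    (R := fun c d => ∃ u v, Quotient.mk sde u = c ∧ Quotient.mk sde v = d ∧ M.DeSim u v)
    ⟨?_, ?_⟩ ⟨q, r, rfl, rfl, h⟩
  · rintro c d ⟨u, v, rfl, rfl, huv⟩ a c' hc'
    obtain ⟨w, w', hw, rfl, hstep⟩ := hc'
    have hwu : M.DeSim w u := ((hde w u).1 (Quotient.exact hw)).1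
    obtain ⟨v', hv', hwv'⟩ := de_char.1 w v (de_trans hM hwu huv) a w' hstep
    exact ⟨Quotient.mk sde v', ⟨v, v', rfl, rfl, hv'⟩, w', v', rfl, rfl, hwv'⟩
  · rintro c d ⟨u, v, rfl, rfl, huv⟩ ⟨u0, hu0F, hu0⟩
    have h0 : M.DeSim u0 v :=
      de_trans hM ((hde u0 u).1 (Quotient.exact hu0)).1 huv
    exact de_quot_L1 hde hM (de_char.2 u0 v h0 hu0F)
      ⟨u, rfl, ((hde u0 u).1 (Quotient.exact hu0)).2⟩ rfl

lemma de_quot_L2' (hM : M.Complete) : ∀ {x v : Q}, M.DeAttr M.DeSim x v →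
    ∀ {u : Q},
    (M.quotBA sde).DeSim (Quotient.mk sde u) (Quotient.mk sde x) →
    M.DeAttr
      (fun u v => (M.quotBA sde).DeSim (Quotient.mk sde u) (Quotient.mk sde v))
      u v := by
  have hqc : (M.quotBA sde).Complete := quot_complete sde hM
  intro x v h
  induction h with
  | @base x v hR hF =>
    intro u hq
    exact DeAttr.base (de_trans hqc hq (de_quot_of hde hM hR)) hF
  | @step x v V hR hδ hRV hA ih =>
    intro u hq
    refine DeAttr.step' (de_trans hqc hq (de_quot_of hde hM hR)) ?_
    intro a u' hu'
    have hmove : Quotient.mk sde u' ∈ (M.quotBA sde).δ (Quotient.mk sde u) a :=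
      ⟨u, u', rfl, rfl, hu'⟩
    obtain ⟨d', hd', hsim'⟩ := (de_char (M := M.quotBA sde)).1 _ _ hq a _ hmove
    obtain ⟨w, w', hw, hw', hst⟩ := hd'
    have hwx : M.DeSim w x := ((hde w x).1 (Quotient.exact hw)).1
    obtain ⟨x'', hx'', hw'x''⟩ := de_char.1 w x hwx a w' hst
    rw [← hw'] at hsim'
    have hq' : (M.quotBA sde).DeSim (Quotient.mk sde u') (Quotient.mk sde x'') :=
      de_trans hqc hsim' (de_quot_of hde hM hw'x'')
    exact ⟨V a x'', hδ a x'' hx'',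
      de_trans hqc hq' (de_quot_of hde hM (hRV a x'' hx'')),
      ih a x'' hx'' hq'⟩

lemma de_quot_L2'' (hM : M.Complete) : ∀ {c d : Quotient sde},
    (M.quotBA sde).DeAttr (M.quotBA sde).DeSim c d →
    ∀ {u v w : Q}, Quotient.mk sde u = c → Quotient.mk sde w = d → M.DeSim w v →
    M.DeAttr
      (fun u v => (M.quotBA sde).DeSim (Quotient.mk sde u) (Quotient.mk sde v))
      u v := by
  have hqc : (M.quotBA sde).Complete := quot_complete sde hM
  intro c d h
  induction h with
  | @base c d hR hF =>
    rintro u v w rfl rfl hwv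
    obtain ⟨v0, hv0F, hv0⟩ := hF
    have hv0v : M.DeSim v0 v :=
      de_trans hM ((hde v0 w).1 (Quotient.exact hv0)).1 hwv
    refine de_quot_L2' hde hM (de_char.2 v0 v hv0v hv0F) ?_
    rw [hv0]
    exact hR
  | @step c d V hR hδ hRV hA ih =>
    rintro u v w rfl rfl hwv
    refine DeAttr.step' (de_trans hqc hR (de_quot_of hde hM hwv)) ?_
    intro a u' hu'
    have hmove : Quotient.mk sde u' ∈ (M.quotBA sde).δ (Quotient.mk sde u) a :=
      ⟨u, u', rfl, rfl, hu'⟩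
    obtain ⟨w₂, w₂', hw₂, hw₂', hst⟩ := hδ a (Quotient.mk sde u') hmove
    have hw₂v : M.DeSim w₂ v :=
      de_trans hM ((hde w₂ w).1 (Quotient.exact hw₂)).1 hwv
    obtain ⟨v', hv', hw₂'v'⟩ := de_char.1 w₂ v hw₂v a w₂' hst
    have hsim' := hRV a (Quotient.mk sde u') hmove
    rw [← hw₂'] at hsim'
    exact ⟨v', hv',
      de_trans hqc hsim' (de_quot_of hde hM hw₂'v'),
      ih a (Quotient.mk sde u') hmove rfl hw₂' hw₂'v'⟩

lemma de_quot_to (hM : M.Complete) {q r : Q}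
    (h : (M.quotBA sde).DeSim (Quotient.mk sde q) (Quotient.mk sde r)) :
    M.DeSim q r := by
  have hqc : (M.quotBA sde).Complete := quot_complete sde hM
  refine de_of_char hM
    (R := fun u v => (M.quotBA sde).DeSim (Quotient.mk sde u) (Quotient.mk sde v))
    ⟨?_, ?_⟩ h
  · intro u v huv a u' hu'
    have hmove : Quotient.mk sde u' ∈ (M.quotBA sde).δ (Quotient.mk sde u) a :=
      ⟨u, u', rfl, rfl, hu'⟩
    obtain ⟨d', hd', hsim'⟩ := (de_char (M := M.quotBA sde)).1 _ _ huv a _ hmove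
    obtain ⟨w, w', hw, hw', hst⟩ := hd'
    have hwv : M.DeSim w v := ((hde w v).1 (Quotient.exact hw)).1
    obtain ⟨v', hv', hw'v'⟩ := de_char.1 w v hwv a w' hst
    rw [← hw'] at hsim'
    exact ⟨v', hv', de_trans hqc hsim' (de_quot_of hde hM hw'v')⟩
  · intro u v huv huF
    exact de_quot_L2'' hde hM
      ((de_char (M := M.quotBA sde)).2 _ _ huv ⟨u, huF, rfl⟩)
      rfl rfl (de_refl hM v)

end DelayedQuot

end QuotAux

end BA

section FinalAux

variable {A : Type u} {Q : Type v}

/-- With an empty alphabet every simulation holds trivially. -/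
lemma BA.sim_of_isEmpty [IsEmpty A] (N : BA A Q)
    (C : (ℕ → Q) → (ℕ → Q) → Prop) (p q : Q) : N.Sim C p q :=
  ⟨fun r _ _ _ => r, fun _ _ a => isEmptyElim a, fun α _ _ _ => isEmptyElim (α 0)⟩

end FinalAux

/-- for direct and delayed simulation, the relation lifted to the
quotient by similarity (`[q] ⊑ [r]` iff `q ⊑ₓ r`) is well defined and equals the
maximal `x`-simulation on the quotient automaton. -/
theorem stmt10 {A : Type u} {Q : Type v} (M : BA A Q) (hM : M.Complete)
    (sdi sde : Setoid Q)
    (hdi : ∀ u v : Q, sdi.r u v ↔ (M.DiSim u v ∧ M.DiSim v u))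
    (hde : ∀ u v : Q, sde.r u v ↔ (M.DeSim u v ∧ M.DeSim v u)) :
    ((∀ q q' r r' : Q, sdi.r q q' → sdi.r r r' → (M.DiSim q r ↔ M.DiSim q' r')) ∧
      ∀ q r : Q, (M.quotBA sdi).DiSim (Quotient.mk sdi q) (Quotient.mk sdi r) ↔
        M.DiSim q r) ∧
    ((∀ q q' r r' : Q, sde.r q q' → sde.r r r' → (M.DeSim q r ↔ M.DeSim q' r')) ∧
      ∀ q r : Q, (M.quotBA sde).DeSim (Quotient.mk sde q) (Quotient.mk sde r) ↔
        M.DeSim q r) := by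
  by_cases hA : Nonempty A
  · refine ⟨⟨?_, ?_⟩, ⟨?_, ?_⟩⟩
    · intro q q' r r' hq hr
      obtain ⟨h1, h2⟩ := (hdi q q').1 hq
      obtain ⟨h3, h4⟩ := (hdi r r').1 hr
      exact ⟨fun h => BA.di_trans hM h2 (BA.di_trans hM h h3),
        fun h => BA.di_trans hM h1 (BA.di_trans hM h h4)⟩
    · intro q r
      exact ⟨BA.di_quot_to hdi hM, BA.di_quot_of hdi hM⟩
    · intro q q' r r' hq hr
      obtain ⟨h1, h2⟩ := (hde q q').1 hq
      obtain ⟨h3, h4⟩ := (hde r r').1 hr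
      exact ⟨fun h => BA.de_trans hM h2 (BA.de_trans hM h h3),
        fun h => BA.de_trans hM h1 (BA.de_trans hM h h4)⟩
    · intro q r
      exact ⟨BA.de_quot_to hde hM, BA.de_quot_of hde hM⟩
  · have : IsEmpty A := not_nonempty_iff.1 hA
    refine ⟨⟨?_, ?_⟩, ⟨?_, ?_⟩⟩ <;> intro q
    · intro q' r r' _ _
      exact iff_of_true (M.sim_of_isEmpty _ _ _) (M.sim_of_isEmpty _ _ _)
    · intro r
      exact iff_of_true ((M.quotBA sdi).sim_of_isEmpty _ _ _) (M.sim_of_isEmpty _ _ _)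
    · intro q' r r' _ _
      exact iff_of_true (M.sim_of_isEmpty _ _ _) (M.sim_of_isEmpty _ _ _)
    · intro r
      exact iff_of_true ((M.quotBA sde).sim_of_isEmpty _ _ _) (M.sim_of_isEmpty _ _ _)
end

section
/- The direct simulation preorder is contained in the delayed simulation preorder, which is contained in the fair simulation preorder, which is contained in language inclusion: p ⊑_di q implies p ⊑_de q implies p ⊑_f q implies L(p) ⊆ L(q). -/
open scoped Classical

universe u v

/-- `⊑_di ⊆ ⊑_de ⊆ ⊑_f ⊆` language inclusion. -/
theorem stmt11 {A : Type u} {Q : Type v} (M : BA A Q) (hM : M.Complete)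
    (p q : Q) :
    (M.DiSim p q → M.DeSim p q) ∧
    (M.DeSim p q → M.FairSim p q) ∧
    (M.FairSim p q → M.LangFrom p ⊆ M.LangFrom q) := by
  refine ⟨?_, ?_, ?_⟩
  · rintro ⟨σ, hσ, hw⟩
    exact ⟨σ, hσ, fun α ρ h0 hr i hi => ⟨i, le_refl i, hw α ρ h0 hr i hi⟩⟩
  · rintro ⟨σ, hσ, hw⟩
    refine ⟨σ, hσ, fun α ρ h0 hr hinf n => ?_⟩
    obtain ⟨m, hm, hF⟩ := hinf n
    obtain ⟨k, hk, hkF⟩ := hw α ρ h0 hr m hF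
    exact ⟨k, le_trans hm hk, hkF⟩
  · rintro ⟨σ, hσ, hw⟩ α ⟨ρ, h0, hr, hinf⟩
    refine ⟨BA.play σ q α ρ, rfl, fun i => hσ _ _ _ _, hw α ρ h0 hr hinf⟩
end
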